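/- arXiv:math/9812075 — 7 statements merged into one kernel-verified Lean document; each statement's English description precedes it below -/
import Mathlib

section
/- For all sufficiently large positive integers n, it is impossible to place, for each of the p(n) distinct partitions λ of n, a translate of the Ferrers diagram of λ inside the rectangle R_n, in such a way that these p(n) placed diagrams are pairwise non-overlapping and together cover every cell of R_n. -/
open Filter Real

/-- The Ferrers diagram of a partition: the cell `(j, i)` (column `j`, row `i`)
belongs iff `1 ≤ j`, `1 ≤ i`, and at least `i` parts are `≥ j`
(i.e. row `i` has length `≥ j`). -/
def ferrersDiagram {n : ℕ} (lam : Nat.Partition n) : Set (ℤ × ℤ) :=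
  {c | 1 ≤ c.1 ∧ 1 ≤ c.2 ∧ c.2 ≤ ((lam.parts.filter (fun x => c.1 ≤ (x : ℤ))).card : ℤ)}

/-- The translate of the Ferrers diagram of `lam` with apex at `(a, b)`. -/
def placedFerrers {n : ℕ} (lam : Nat.Partition n) (a b : ℤ) : Set (ℤ × ℤ) :=
  (fun c : ℤ × ℤ => (c.1 + a - 1, c.2 + b - 1)) '' ferrersDiagram lam

/-- The number `p(n)` of partitions of `n`. -/
def numPartitions (n : ℕ) : ℕ := Fintype.card (Nat.Partition n)

/-- The rectangle `R_n` of width `p(n)` and height `n`. -/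
def rectR (n : ℕ) : Set (ℤ × ℤ) :=
  {c | 1 ≤ c.1 ∧ c.1 ≤ (numPartitions n : ℤ) ∧ 1 ≤ c.2 ∧ c.2 ≤ (n : ℤ)}

namespace PackingAux

open Finset


/-- column height of the Ferrers diagram at (integer) column `t`. -/
def Hz {n : ℕ} (lam : Nat.Partition n) (t : ℤ) : ℕ :=
  (lam.parts.filter (fun x : ℕ => t ≤ (x : ℤ))).card

lemma card_coe {n : ℕ} (lam : Nat.Partition n) (t : ℤ) :
    Multiset.card (Multiset.filter (fun x : ℤ => t ≤ x)
      (do let a ← lam.parts; pure ((a : ℤ)))) = Hz lam t := by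
  show Multiset.card (Multiset.filter _ (Multiset.bind lam.parts (fun a => {(a : ℤ)}))) = _
  rw [Multiset.bind_singleton, Multiset.filter_map, Multiset.card_map]
  rfl

lemma mem_ferrers {n : ℕ} {lam : Nat.Partition n} {c : ℤ × ℤ} :
    c ∈ ferrersDiagram lam ↔ 1 ≤ c.1 ∧ 1 ≤ c.2 ∧ c.2 ≤ (Hz lam c.1 : ℤ) := by
  unfold ferrersDiagram
  rw [Set.mem_setOf_eq, ← card_coe lam c.1]

lemma mem_placed {n : ℕ} {lam : Nat.Partition n} {a b : ℤ} {c : ℤ × ℤ} :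
    c ∈ placedFerrers lam a b ↔
      a ≤ c.1 ∧ b ≤ c.2 ∧ c.2 - b + 1 ≤ (Hz lam (c.1 - a + 1) : ℤ) := by
  constructor
  · rintro ⟨⟨j, i⟩, hm, heq⟩
    rw [mem_ferrers] at hm
    obtain ⟨h1, h2, h3⟩ := hm
    have e1 : j + a - 1 = c.1 := congrArg Prod.fst heq
    have e2 : i + b - 1 = c.2 := congrArg Prod.snd heq
    have ej : c.1 - a + 1 = j := by omega
    refine ⟨by omega, by omega, ?_⟩
    rw [ej]
    have : c.2 - b + 1 = i := by omega
    rw [this]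
    exact h3
  · rintro ⟨h1, h2, h3⟩
    refine ⟨(c.1 - a + 1, c.2 - b + 1), ?_, ?_⟩
    · rw [mem_ferrers]
      exact ⟨by omega, by omega, h3⟩
    · obtain ⟨c1, c2⟩ := c
      simp only [Prod.mk.injEq]
      constructor <;> omega

lemma Hz_anti {n : ℕ} (lam : Nat.Partition n) {s t : ℤ} (h : s ≤ t) :
    Hz lam t ≤ Hz lam s :=
  Multiset.card_le_card (Multiset.monotone_filter_right _ (fun x hx => le_trans h hx))

lemma Hz_pos {n : ℕ} {lam : Nat.Partition n} {v : ℕ} (h : ∃ x ∈ lam.parts, v < x) :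
    1 ≤ Hz lam ((v : ℤ) + 1) := by
  obtain ⟨x, hx, hvx⟩ := h
  have hm : x ∈ lam.parts.filter (fun x : ℕ => ((v : ℤ) + 1) ≤ (x : ℤ)) :=
    Multiset.mem_filter.2 ⟨hx, by exact_mod_cast hvx⟩
  have := Multiset.card_pos_iff_exists_mem.2 ⟨x, hm⟩
  unfold Hz
  omega

lemma Hz_drop {n : ℕ} {lam : Nat.Partition n} {v : ℕ} (h : v ∈ lam.parts) :
    Hz lam ((v : ℤ) + 1) < Hz lam (v : ℤ) := by
  have key : Hz lam ((v : ℤ) + 1) + (lam.parts.filter (fun x : ℕ => (x : ℤ) = (v : ℤ))).card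
      = Hz lam (v : ℤ) := by
    unfold Hz
    rw [← Multiset.card_add, Multiset.filter_add_filter]
    have h1 : Multiset.filter (fun a : ℕ => (((v : ℤ) + 1) ≤ (a : ℤ)) ∧ ((a : ℤ) = (v : ℤ)))
        lam.parts = 0 := by
      rw [Multiset.filter_eq_nil]
      rintro a _ ⟨ha1, ha2⟩
      omega
    rw [h1, add_zero]
    congr 1
    apply Multiset.filter_congr
    intro x _
    constructor
    · rintro (h' | h') <;> omega
    · intro h'
      omega
  have hv : v ∈ lam.parts.filter (fun x : ℕ => (x : ℤ) = (v : ℤ)) :=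
    Multiset.mem_filter.2 ⟨h, rfl⟩
  have := Multiset.card_pos_iff_exists_mem.2 ⟨v, hv⟩
  omega



-- helper partition: parts k, w, and (n-k-w) ones
def fam (n w k : ℕ) : Nat.Partition n :=
  if h : 0 < w ∧ 0 < k ∧ k + w ≤ n then
    { parts := k ::ₘ w ::ₘ Multiset.replicate (n - k - w) 1
      parts_pos := by
        intro i hi
        rcases Multiset.mem_cons.1 hi with rfl | hi
        · exact h.2.1
        rcases Multiset.mem_cons.1 hi with rfl | hi
        · exact h.1
        · rw [Multiset.eq_of_mem_replicate hi]; norm_num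
      parts_sum := by
        rw [Multiset.sum_cons, Multiset.sum_cons, Multiset.sum_replicate, smul_eq_mul, mul_one]
        omega }
  else Nat.Partition.indiscrete n

lemma fam_parts {n w k : ℕ} (h : 0 < w ∧ 0 < k ∧ k + w ≤ n) :
    (fam n w k).parts = k ::ₘ w ::ₘ Multiset.replicate (n - k - w) 1 := by
  rw [fam, dif_pos h]

lemma fam_filter_sum {n w k m : ℕ} (h : 0 < w ∧ 0 < k ∧ k + w ≤ n)
    (hm : w < m ∧ 1 < m ∧ m ≤ k) :
    ((fam n w k).parts.filter (fun x => m ≤ x)).sum = k := by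
  rw [fam_parts h]
  rw [Multiset.filter_cons_of_pos _ hm.2.2, Multiset.filter_cons_of_neg _ (by omega)]
  have : Multiset.filter (fun x => m ≤ x) (Multiset.replicate (n - k - w) 1) = 0 := by
    rw [Multiset.filter_eq_nil]
    intro a ha
    rw [Multiset.eq_of_mem_replicate ha]
    omega
  rw [this]
  simp

lemma fam_d {n w k : ℕ} (h : 0 < w ∧ 0 < k ∧ k + w ≤ n) (h1 : 1 < w) (h2 : w < k)
    (h3 : k + w < n) : 3 ≤ (fam n w k).parts.toFinset.card := by
  have hsub : ({1, w, k} : Finset ℕ) ⊆ (fam n w k).parts.toFinset := by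
    intro x hx
    rw [Multiset.mem_toFinset, fam_parts h]
    simp only [Finset.mem_insert, Finset.mem_singleton] at hx
    rcases hx with rfl | rfl | rfl
    · exact Multiset.mem_cons.2 (Or.inr (Multiset.mem_cons.2 (Or.inr
        (Multiset.mem_replicate.2 ⟨by omega, rfl⟩))))
    · exact Multiset.mem_cons.2 (Or.inr (Multiset.mem_cons.2 (Or.inl rfl)))
    · exact Multiset.mem_cons.2 (Or.inl rfl)
  have hcard : ({1, w, k} : Finset ℕ).card = 3 := by
    rw [Finset.card_insert_of_notMem (by simp; omega),
      Finset.card_insert_of_notMem (by simp; omega), Finset.card_singleton]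
  calc 3 = ({1, w, k} : Finset ℕ).card := hcard.symm
    _ ≤ _ := Finset.card_le_card hsub

lemma fam_mem_two {n w k : ℕ} (h : 0 < w ∧ 0 < k ∧ k + w ≤ n) (hw : 1 < w) (hk : w < k) :
    (w ∈ (fam n w k).parts) ∧ (∀ x ∈ (fam n w k).parts, x = k ∨ x = w ∨ x = 1) := by
  constructor
  · rw [fam_parts h]; exact Multiset.mem_cons.2 (Or.inr (Multiset.mem_cons.2 (Or.inl rfl)))
  · intro x hx
    rw [fam_parts h] at hx
    rcases Multiset.mem_cons.1 hx with rfl | hx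
    · exact Or.inl rfl
    rcases Multiset.mem_cons.1 hx with rfl | hx
    · exact Or.inr (Or.inl rfl)
    · exact Or.inr (Or.inr (Multiset.eq_of_mem_replicate hx))

lemma parts_toFinset_nonempty {n : ℕ} (hn : 1 ≤ n) (lam : Nat.Partition n) :
    lam.parts.toFinset.Nonempty := by
  rw [Multiset.toFinset_nonempty]
  intro h0
  have := lam.parts_sum
  rw [h0] at this
  simp at this
  omega

lemma partition_eq_of_parts_eq {n : ℕ} {lam mu : Nat.Partition n}
    (h : lam.parts = mu.parts) : lam = mu := by
  cases lam; cases mu; simpa using h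

lemma card_B_le (n : ℕ) (hn : 1 ≤ n) :
    (univ.filter fun lam : Nat.Partition n => lam.parts.toFinset.card ≤ 1).card ≤ n := by
  classical
  have key : ∀ lam : Nat.Partition n, lam.parts.toFinset.card ≤ 1 →
      lam.parts = Multiset.replicate (Multiset.card lam.parts)
        (lam.parts.toFinset.max' (parts_toFinset_nonempty hn lam)) := by
    intro lam hle
    set v := lam.parts.toFinset.max' (parts_toFinset_nonempty hn lam) with hv
    refine Multiset.eq_replicate.2 ⟨rfl, ?_⟩
    intro b hb
    have h1 : b ∈ lam.parts.toFinset := Multiset.mem_toFinset.2 hb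
    have h2 : v ∈ lam.parts.toFinset := Finset.max'_mem _ _
    exact Finset.card_le_one.1 hle _ h1 _ h2
  have hmaps : ∀ lam ∈ (univ.filter fun lam : Nat.Partition n =>
      lam.parts.toFinset.card ≤ 1),
      lam.parts.toFinset.max' (parts_toFinset_nonempty hn lam) ∈ Finset.Icc 1 n := by
    intro lam _
    have hmem : lam.parts.toFinset.max' (parts_toFinset_nonempty hn lam) ∈ lam.parts :=
      Multiset.mem_toFinset.1 (Finset.max'_mem _ _)
    refine Finset.mem_Icc.2 ⟨lam.parts_pos hmem, ?_⟩
    calc lam.parts.toFinset.max' (parts_toFinset_nonempty hn lam)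
        ≤ lam.parts.sum := Multiset.single_le_sum (fun x _ => Nat.zero_le x) _ hmem
      _ = n := lam.parts_sum
  have hinj : Set.InjOn (fun lam : Nat.Partition n =>
      lam.parts.toFinset.max' (parts_toFinset_nonempty hn lam))
      ↑(univ.filter fun lam : Nat.Partition n => lam.parts.toFinset.card ≤ 1) := by
    intro lam hlam mu hmu heq
    simp only [Finset.coe_filter, Set.mem_setOf_eq] at hlam hmu
    have e1 := key lam hlam.2
    have e2 := key mu hmu.2
    set v := lam.parts.toFinset.max' (parts_toFinset_nonempty hn lam) with hv
    have hv1 : 1 ≤ v := (Finset.mem_Icc.1 (hmaps lam (Finset.mem_filter.2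
      ⟨Finset.mem_univ _, hlam.2⟩))).1
    have heqv : mu.parts.toFinset.max' (parts_toFinset_nonempty hn mu) = v := heq.symm
    rw [heqv] at e2
    have s1 : Multiset.card lam.parts * v = n := by
      have := lam.parts_sum
      rw [e1] at this
      rwa [Multiset.sum_replicate, smul_eq_mul] at this
    have s2 : Multiset.card mu.parts * v = n := by
      have := mu.parts_sum
      rw [e2] at this
      rwa [Multiset.sum_replicate, smul_eq_mul] at this
    have : Multiset.card lam.parts = Multiset.card mu.parts :=
      Nat.eq_of_mul_eq_mul_right (by omega) (s1.trans s2.symm)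
    apply partition_eq_of_parts_eq
    rw [e1, e2, this]
  calc (univ.filter fun lam : Nat.Partition n => lam.parts.toFinset.card ≤ 1).card
      ≤ (Finset.Icc 1 n).card := Finset.card_le_card_of_injOn _ hmaps hinj
    _ = n := by rw [Nat.card_Icc]; omega

lemma card_A_ge (n : ℕ) (hn : 13 ≤ n) :
    (n - 5) + (n - 7) ≤
      (univ.filter fun lam : Nat.Partition n => 3 ≤ lam.parts.toFinset.card).card := by
  classical
  set A := univ.filter fun lam : Nat.Partition n => 3 ≤ lam.parts.toFinset.card with hA
  have hcond2 : ∀ k ∈ Finset.Icc 3 (n - 3), 0 < 2 ∧ 0 < k ∧ k + 2 ≤ n := by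
    intro k hk
    rw [Finset.mem_Icc] at hk
    omega
  have hcond3 : ∀ k ∈ Finset.Icc 4 (n - 4), 0 < 3 ∧ 0 < k ∧ k + 3 ≤ n := by
    intro k hk
    rw [Finset.mem_Icc] at hk
    omega
  have hmaps2 : ∀ k ∈ Finset.Icc 3 (n - 3), fam n 2 k ∈ A := by
    intro k hk
    have hk' := Finset.mem_Icc.1 hk
    exact Finset.mem_filter.2 ⟨Finset.mem_univ _,
      fam_d (hcond2 k hk) (by omega) (by omega) (by omega)⟩
  have hmaps3 : ∀ k ∈ Finset.Icc 4 (n - 4), fam n 3 k ∈ A := by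
    intro k hk
    have hk' := Finset.mem_Icc.1 hk
    exact Finset.mem_filter.2 ⟨Finset.mem_univ _,
      fam_d (hcond3 k hk) (by omega) (by omega) (by omega)⟩
  have hinj2 : Set.InjOn (fun k => fam n 2 k) ↑(Finset.Icc 3 (n - 3)) := by
    intro k hk k' hk' heq
    have e1 := fam_filter_sum (m := 3) (hcond2 k hk) ⟨by omega, by omega,
      (Finset.mem_Icc.1 hk).1⟩
    have e2 := fam_filter_sum (m := 3) (hcond2 k' hk') ⟨by omega, by omega,
      (Finset.mem_Icc.1 hk').1⟩
    simp only at heq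
    rw [← e1, ← e2, heq]
  have hinj3 : Set.InjOn (fun k => fam n 3 k) ↑(Finset.Icc 4 (n - 4)) := by
    intro k hk k' hk' heq
    have e1 := fam_filter_sum (m := 4) (hcond3 k hk) ⟨by omega, by omega,
      (Finset.mem_Icc.1 hk).1⟩
    have e2 := fam_filter_sum (m := 4) (hcond3 k' hk') ⟨by omega, by omega,
      (Finset.mem_Icc.1 hk').1⟩
    simp only at heq
    rw [← e1, ← e2, heq]
  have hdisj : Disjoint ((Finset.Icc 3 (n - 3)).image (fun k => fam n 2 k))
      ((Finset.Icc 4 (n - 4)).image (fun k => fam n 3 k)) := by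
    rw [Finset.disjoint_left]
    rintro lam h2 h3
    obtain ⟨k, hk, rfl⟩ := Finset.mem_image.1 h2
    obtain ⟨k', hk', heq⟩ := Finset.mem_image.1 h3
    have hk2 := Finset.mem_Icc.1 hk
    have hk3 := Finset.mem_Icc.1 hk'
    have htwo : (2 : ℕ) ∈ (fam n 2 k).parts := (fam_mem_two (hcond2 k hk)
      (by omega) (by omega)).1
    rw [← heq] at htwo
    have := (fam_mem_two (hcond3 k' hk') (by omega) (by omega)).2 2 htwo
    omega
  have hunion : ((Finset.Icc 3 (n - 3)).image (fun k => fam n 2 k)) ∪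
      ((Finset.Icc 4 (n - 4)).image (fun k => fam n 3 k)) ⊆ A := by
    intro lam hl
    rcases Finset.mem_union.1 hl with hl | hl
    · obtain ⟨k, hk, rfl⟩ := Finset.mem_image.1 hl
      exact hmaps2 k hk
    · obtain ⟨k, hk, rfl⟩ := Finset.mem_image.1 hl
      exact hmaps3 k hk
  have c2 : ((Finset.Icc 3 (n - 3)).image (fun k => fam n 2 k)).card = n - 5 := by
    rw [Finset.card_image_of_injOn hinj2, Nat.card_Icc]
    omega
  have c3 : ((Finset.Icc 4 (n - 4)).image (fun k => fam n 3 k)).card = n - 7 := by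
    rw [Finset.card_image_of_injOn hinj3, Nat.card_Icc]
    omega
  calc (n - 5) + (n - 7)
      = (((Finset.Icc 3 (n - 3)).image (fun k => fam n 2 k)) ∪
          ((Finset.Icc 4 (n - 4)).image (fun k => fam n 3 k))).card := by
        rw [Finset.card_union_of_disjoint hdisj, c2, c3]
    _ ≤ A.card := Finset.card_le_card hunion

lemma mem_placed' {n : ℕ} {lam : Nat.Partition n} {a b x y : ℤ} :
    (x, y) ∈ placedFerrers lam a b ↔
      a ≤ x ∧ b ≤ y ∧ y - b + 1 ≤ (Hz lam (x - a + 1) : ℤ) := mem_placed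

lemma no_tiling (n : ℕ) (hn : 13 ≤ n) :
    ¬ ∃ pos : Nat.Partition n → ℤ × ℤ,
      (∀ lam, placedFerrers lam (pos lam).1 (pos lam).2 ⊆ rectR n) ∧
      (Pairwise fun lam mu =>
        Disjoint (placedFerrers lam (pos lam).1 (pos lam).2)
          (placedFerrers mu (pos mu).1 (pos mu).2)) ∧
      (⋃ lam, placedFerrers lam (pos lam).1 (pos lam).2) = rectR n := by
  classical
  rintro ⟨pos, hsub, hdisj, hcover⟩
  haveI : Nonempty (Nat.Partition n) := ⟨Nat.Partition.indiscrete n⟩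
  have hdisj' : ∀ {mu nu : Nat.Partition n} {c : ℤ × ℤ}, mu ≠ nu →
      c ∈ placedFerrers mu (pos mu).1 (pos mu).2 →
      c ∈ placedFerrers nu (pos nu).1 (pos nu).2 → False := by
    intro mu nu c hne h1 h2
    exact Set.disjoint_left.1 (hdisj hne) h1 h2
  set S : Finset (Nat.Partition n × ℕ) :=
    (Finset.univ ×ˢ Finset.Icc 1 n).filter
      (fun q => q.2 ∈ q.1.parts ∧ 1 ≤ Hz q.1 ((q.2 : ℤ) + 1)) with hSdef
  have hSmem : ∀ q ∈ S, q.2 ∈ q.1.parts ∧ 1 ≤ Hz q.1 ((q.2 : ℤ) + 1) := by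
    intro q hq
    rw [hSdef, Finset.mem_filter] at hq
    exact hq.2
  -- the cell left of the key corner cell, inside the diagram of q.1
  have hL : ∀ q ∈ S,
      ((pos q.1).1 + q.2 - 1, (pos q.1).2 + (Hz q.1 ((q.2 : ℤ) + 1) : ℤ)) ∈
        placedFerrers q.1 (pos q.1).1 (pos q.1).2 := by
    intro q hq
    obtain ⟨hvp, hH1⟩ := hSmem q hq
    have hv1 : 1 ≤ q.2 := q.1.parts_pos hvp
    have hdrop := Hz_drop hvp
    rw [mem_placed']
    refine ⟨by omega, by omega, ?_⟩
    rw [show (pos q.1).1 + (q.2 : ℤ) - 1 - (pos q.1).1 + 1 = (q.2 : ℤ) from by ring]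
    omega
  -- the diagonal cell below the corner, inside the diagram of q.1
  have hC : ∀ q ∈ S,
      ((pos q.1).1 + q.2, (pos q.1).2 + (Hz q.1 ((q.2 : ℤ) + 1) : ℤ) - 1) ∈
        placedFerrers q.1 (pos q.1).1 (pos q.1).2 := by
    intro q hq
    obtain ⟨hvp, hH1⟩ := hSmem q hq
    rw [mem_placed']
    refine ⟨by omega, by omega, ?_⟩
    rw [show (pos q.1).1 + (q.2 : ℤ) - (pos q.1).1 + 1 = (q.2 : ℤ) + 1 from by ring]
    omega
  -- the corner cell is not in the diagram of q.1
  have hCnot : ∀ q ∈ S,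
      ((pos q.1).1 + q.2, (pos q.1).2 + (Hz q.1 ((q.2 : ℤ) + 1) : ℤ)) ∉
        placedFerrers q.1 (pos q.1).1 (pos q.1).2 := by
    intro q hq hmem
    rw [mem_placed'] at hmem
    obtain ⟨-, -, h3⟩ := hmem
    rw [show (pos q.1).1 + (q.2 : ℤ) - (pos q.1).1 + 1 = (q.2 : ℤ) + 1 from by ring] at h3
    omega
  -- the corner cell lies in the rectangle
  have hrect : ∀ q ∈ S,
      ((pos q.1).1 + q.2, (pos q.1).2 + (Hz q.1 ((q.2 : ℤ) + 1) : ℤ)) ∈ rectR n := by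
    intro q hq
    have h1 := hsub q.1 (hC q hq)
    have h2 := hsub q.1 (hL q hq)
    simp only [rectR, Set.mem_setOf_eq] at h1 h2 ⊢
    omega
  -- main geometric fact: the corner cell is the apex of some piece
  have hmain : ∀ q ∈ S, ∃ mu,
      pos mu = ((pos q.1).1 + q.2, (pos q.1).2 + (Hz q.1 ((q.2 : ℤ) + 1) : ℤ)) := by
    intro q hq
    have hrq := hrect q hq
    rw [← hcover] at hrq
    obtain ⟨mu, hmu⟩ := Set.mem_iUnion.1 hrq
    have hne : mu ≠ q.1 := by
      intro e
      rw [e] at hmu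
      exact hCnot q hq hmu
    rw [mem_placed'] at hmu
    obtain ⟨m1, m2, m3⟩ := hmu
    have hB : (pos mu).2 = (pos q.1).2 + (Hz q.1 ((q.2 : ℤ) + 1) : ℤ) := by
      by_contra hBne
      have : ((pos q.1).1 + q.2, (pos q.1).2 + (Hz q.1 ((q.2 : ℤ) + 1) : ℤ) - 1) ∈
          placedFerrers mu (pos mu).1 (pos mu).2 := by
        rw [mem_placed']
        exact ⟨m1, by omega, by omega⟩
      exact hdisj' hne this (hC q hq)
    have hA : (pos mu).1 = (pos q.1).1 + q.2 := by
      by_contra hAne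
      have hanti := Hz_anti mu (show ((pos q.1).1 + (q.2 : ℤ)) - (pos mu).1 + 1 - 1 ≤
        ((pos q.1).1 + (q.2 : ℤ)) - (pos mu).1 + 1 from by omega)
      have : ((pos q.1).1 + q.2 - 1, (pos q.1).2 + (Hz q.1 ((q.2 : ℤ) + 1) : ℤ)) ∈
          placedFerrers mu (pos mu).1 (pos mu).2 := by
        rw [mem_placed']
        refine ⟨by omega, by omega, ?_⟩
        rw [show (pos q.1).1 + (q.2 : ℤ) - 1 - (pos mu).1 + 1 =
          ((pos q.1).1 + (q.2 : ℤ)) - (pos mu).1 + 1 - 1 from by ring]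
        omega
      exact hdisj' hne this (hL q hq)
    refine ⟨mu, Prod.ext_iff.2 ⟨hA, hB⟩⟩
  have hmain' : ∀ q : Nat.Partition n × ℕ, ∃ mu, q ∈ S →
      pos mu = ((pos q.1).1 + q.2, (pos q.1).2 + (Hz q.1 ((q.2 : ℤ) + 1) : ℤ)) := by
    intro q
    by_cases h : q ∈ S
    · obtain ⟨mu, hmu⟩ := hmain q h
      exact ⟨mu, fun _ => hmu⟩
    · exact ⟨Classical.arbitrary _, fun c => absurd c h⟩
  choose Phi hPhi using hmain'
  have hinj : Set.InjOn Phi ↑S := by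
    intro q hq q' hq' heq
    have hq := Finset.mem_coe.1 hq
    have hq' := Finset.mem_coe.1 hq'
    have e : ((pos q.1).1 + q.2, (pos q.1).2 + (Hz q.1 ((q.2 : ℤ) + 1) : ℤ))
        = ((pos q'.1).1 + q'.2, (pos q'.1).2 + (Hz q'.1 ((q'.2 : ℤ) + 1) : ℤ)) := by
      rw [← hPhi q hq, ← hPhi q' hq', heq]
    rw [Prod.mk.injEq] at e
    obtain ⟨e1, e2⟩ := e
    have h1 : q.1 = q'.1 := by
      by_contra hne
      have hLq' := hL q' hq'
      rw [← e1, ← e2] at hLq'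
      exact hdisj' hne (hL q hq) hLq'
    rw [h1] at e1
    have h2 : q.2 = q'.2 := by
      have : (q.2 : ℤ) = (q'.2 : ℤ) := by omega
      exact_mod_cast this
    exact Prod.ext_iff.2 ⟨h1, h2⟩
  have card1 : S.card ≤ (Finset.univ : Finset (Nat.Partition n)).card :=
    Finset.card_le_card_of_injOn Phi (fun q _ => Finset.mem_univ _) hinj
  -- lower bound on the fibers of S
  have hfib : ∀ lam : Nat.Partition n,
      lam.parts.toFinset.card - 1 ≤ (S.filter fun q => q.1 = lam).card := by
    intro lam
    have hne := parts_toFinset_nonempty (by omega) lam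
    set mx := lam.parts.toFinset.max' hne with hmx
    have hmxp : mx ∈ lam.parts := Multiset.mem_toFinset.1 (Finset.max'_mem _ _)
    have hsubE : (lam.parts.toFinset.erase mx).image (fun v => (lam, v)) ⊆
        S.filter fun q => q.1 = lam := by
      intro q hq
      obtain ⟨v, hv, rfl⟩ := Finset.mem_image.1 hq
      have hvne := (Finset.mem_erase.1 hv).1
      have hvm : v ∈ lam.parts := Multiset.mem_toFinset.1 (Finset.mem_erase.1 hv).2
      have hvlt : v < mx := lt_of_le_of_ne
        (Finset.le_max' _ _ (Multiset.mem_toFinset.2 hvm)) hvne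
      have hvn : v ≤ n := by
        calc v ≤ lam.parts.sum := Multiset.single_le_sum (fun x _ => Nat.zero_le x) _ hvm
          _ = n := lam.parts_sum
      refine Finset.mem_filter.2 ⟨?_, rfl⟩
      rw [hSdef, Finset.mem_filter, Finset.mem_product]
      exact ⟨⟨Finset.mem_univ _, Finset.mem_Icc.2 ⟨lam.parts_pos hvm, hvn⟩⟩,
        hvm, Hz_pos ⟨mx, hmxp, hvlt⟩⟩
    calc lam.parts.toFinset.card - 1
        = (lam.parts.toFinset.erase mx).card :=
          (Finset.card_erase_of_mem (Finset.max'_mem _ _)).symm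
      _ = ((lam.parts.toFinset.erase mx).image (fun v => (lam, v))).card := by
          rw [Finset.card_image_of_injective _ (fun x y h => by
            simpa using congrArg Prod.snd h)]
      _ ≤ _ := Finset.card_le_card hsubE
  have hsum : S.card = ∑ lam ∈ (univ : Finset (Nat.Partition n)),
      (S.filter fun q => q.1 = lam).card :=
    Finset.card_eq_sum_card_fiberwise (fun x _ => Finset.mem_univ _)
  have hge : ∑ lam ∈ (univ : Finset (Nat.Partition n)),
      (lam.parts.toFinset.card - 1) ≤ S.card := by
    rw [hsum]
    exact Finset.sum_le_sum (fun lam _ => hfib lam)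
  have hsplit := Finset.sum_filter_add_sum_filter_not univ
    (fun lam : Nat.Partition n => 3 ≤ lam.parts.toFinset.card)
    (fun lam => lam.parts.toFinset.card - 1)
  have hA2 : 2 * (univ.filter fun lam : Nat.Partition n =>
      3 ≤ lam.parts.toFinset.card).card ≤
      ∑ lam ∈ univ.filter (fun lam : Nat.Partition n => 3 ≤ lam.parts.toFinset.card),
        (lam.parts.toFinset.card - 1) := by
    calc 2 * (univ.filter fun lam : Nat.Partition n => 3 ≤ lam.parts.toFinset.card).card
        = ∑ _lam ∈ univ.filter (fun lam : Nat.Partition n =>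
            3 ≤ lam.parts.toFinset.card), 2 := by
          rw [Finset.sum_const, smul_eq_mul, mul_comm]
      _ ≤ _ := Finset.sum_le_sum (fun lam hl => by
          have := (Finset.mem_filter.1 hl).2
          omega)
  have hC2 : ((univ.filter fun lam : Nat.Partition n =>
      ¬ 3 ≤ lam.parts.toFinset.card).filter
        fun lam => ¬ lam.parts.toFinset.card ≤ 1).card ≤
      ∑ lam ∈ univ.filter (fun lam : Nat.Partition n => ¬ 3 ≤ lam.parts.toFinset.card),
        (lam.parts.toFinset.card - 1) := by
    calc ((univ.filter fun lam : Nat.Partition n =>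
          ¬ 3 ≤ lam.parts.toFinset.card).filter
            fun lam => ¬ lam.parts.toFinset.card ≤ 1).card
        = ∑ _lam ∈ (univ.filter fun lam : Nat.Partition n =>
            ¬ 3 ≤ lam.parts.toFinset.card).filter
              (fun lam => ¬ lam.parts.toFinset.card ≤ 1), 1 := by
          rw [Finset.sum_const, smul_eq_mul, mul_one]
      _ ≤ ∑ lam ∈ (univ.filter fun lam : Nat.Partition n =>
            ¬ 3 ≤ lam.parts.toFinset.card).filter
              (fun lam => ¬ lam.parts.toFinset.card ≤ 1),
            (lam.parts.toFinset.card - 1) := Finset.sum_le_sum (fun lam hl => by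
          have := (Finset.mem_filter.1 hl).2
          omega)
      _ ≤ _ := Finset.sum_le_sum_of_subset (Finset.filter_subset _ _)
  have hc1 := Finset.card_filter_add_card_filter_not
    (s := (univ : Finset (Nat.Partition n)))
    (p := fun lam => 3 ≤ lam.parts.toFinset.card)
  have hc2 := Finset.card_filter_add_card_filter_not
    (s := univ.filter fun lam : Nat.Partition n => ¬ 3 ≤ lam.parts.toFinset.card)
    (p := fun lam => lam.parts.toFinset.card ≤ 1)
  have hc3 : ((univ.filter fun lam : Nat.Partition n =>
      ¬ 3 ≤ lam.parts.toFinset.card).filter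
        fun lam => lam.parts.toFinset.card ≤ 1).card ≤ n := by
    refine le_trans (Finset.card_le_card ?_) (card_B_le n (by omega))
    intro lam hl
    exact Finset.mem_filter.2 ⟨Finset.mem_univ _, (Finset.mem_filter.1 hl).2⟩
  have hc4 := card_A_ge n hn
  omega

end PackingAux

/-- For all sufficiently large `n`, one cannot place a translate of the Ferrers
diagram of each of the `p(n)` partitions of `n` inside the rectangle `R_n`
so that the placed diagrams are pairwise disjoint and cover all of `R_n`. -/
theorem packing_ferrers_no_tiling :
    ∀ᶠ n : ℕ in atTop,
      ¬ ∃ pos : Nat.Partition n → ℤ × ℤ,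
        (∀ lam, placedFerrers lam (pos lam).1 (pos lam).2 ⊆ rectR n) ∧
        (Pairwise fun lam mu =>
          Disjoint (placedFerrers lam (pos lam).1 (pos lam).2)
            (placedFerrers mu (pos mu).1 (pos mu).2)) ∧
        (⋃ lam, placedFerrers lam (pos lam).1 (pos lam).2) = rectR n := by
  filter_upwards [Filter.eventually_ge_atTop 13] with n hn
  exact PackingAux.no_tiling n hn
end

section
/- For all sufficiently large positive integers n, the number of partitions of n whose largest part is greater than 4·√n·log n is less than p(n)/n. -/
open Filter Real

/-!
Write `T(m) = p(0) + ⋯ + p(m - 1)`. Removing one copy of a part `v > k` from a partition of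
`n` leaves a partition of `n - v`, so `T(n - k)` counts the pairs (`λ ⊢ n`, distinct part of
`λ` exceeding `k`). Hence `T(n - k)` bounds the number of partitions of `n` with a part larger
than `k`, and, as a partition of `n` has at most `√(2n)` distinct parts, `T(n) ≤ √(2n) p(n)`.
Applied at every `j ≤ n`, the latter gives `T(j + 1) = T(j) + p(j) ≥ (1 + 1/√(2n)) T(j)`, so
`T(n - k) ≤ (1 + 1/√(2n))^(-k) √(2n) p(n)`. For `k = 4√n log n` the factor
`(1 + 1/√(2n))^(-k) ≈ n^(-2√2)` beats `√(2n) · n`.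
-/

open Finset

theorem Finset.card_mul_card_le_two_mul_sum {S : Finset ℕ} (hS : ∀ x ∈ S, 0 < x) :
    #S * #S ≤ 2 * ∑ x ∈ S, x := by
  induction S using Finset.induction_on_max with
  | empty => simp
  | insert a S ha ih =>
    have hS' : ∀ x ∈ S, 0 < x := fun x hx => hS x (mem_insert_of_mem hx)
    have hcard : #S + 1 ≤ a := by
      have := card_le_card fun x hx => mem_Ico.2 ⟨hS' x hx, ha x hx⟩
      have := hS a (mem_insert_self a S)
      simp only [Nat.card_Ico] at *
      omega
    rw [card_insert_of_notMem fun h => (ha a h).false, sum_insert fun h => (ha a h).false]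
    nlinarith [ih hS']

namespace Nat.Partition

variable {n : ℕ}

theorem sum_toFinset_parts_le (l : n.Partition) : ∑ x ∈ l.parts.toFinset, x ≤ n := by
  obtain ⟨u, hu⟩ := Multiset.le_iff_exists_add.1 (Multiset.dedup_le l.parts)
  calc ∑ x ∈ l.parts.toFinset, x = l.parts.dedup.sum := by simp [Finset.sum]
    _ ≤ l.parts.dedup.sum + u.sum := le_self_add
    _ = n := by rw [← Multiset.sum_add, ← hu, l.parts_sum]

theorem card_toFinset_parts_le_sqrt (l : n.Partition) : #l.parts.toFinset ≤ Nat.sqrt (2 * n) :=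
  Nat.le_sqrt.2 <| (card_mul_card_le_two_mul_sum fun _ hx =>
    l.parts_pos (Multiset.mem_toFinset.1 hx)).trans (by grw [sum_toFinset_parts_le])

theorem card_filter_mem_parts {v : ℕ} (hv : 1 ≤ v) (hvn : v ≤ n) :
    #{l : n.Partition | v ∈ l.parts} = numPartitions (n - v) := by
  rw [numPartitions, ← Fintype.card_congr (partitionWithPartEquiv hv hvn), Fintype.card_subtype]

end Nat.Partition

def sumNumPartitions (n : ℕ) : ℕ := ∑ m ∈ range n, numPartitions m

theorem sumNumPartitions_succ (n : ℕ) :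
    sumNumPartitions (n + 1) = sumNumPartitions n + numPartitions n :=
  sum_range_succ _ _

theorem sumNumPartitions_sub_eq_sum_card (k n : ℕ) :
    sumNumPartitions (n - k) = ∑ l : n.Partition, #{x ∈ l.parts.toFinset | k < x} := by
  calc sumNumPartitions (n - k) = ∑ v ∈ Ioc k n, numPartitions (n - v) := by
        rw [sumNumPartitions, ← Finset.Ico_add_one_add_one_eq_Ioc, sum_Ico_reflect _ _ le_rfl]
        simp [Nat.Ico_zero_eq_range]
    _ = ∑ v ∈ Ioc k n, #{l : n.Partition | v ∈ l.parts} := by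
        refine sum_congr rfl fun v hv => ?_
        rw [mem_Ioc] at hv
        rw [Nat.Partition.card_filter_mem_parts (by omega) hv.2]
    _ = ∑ l : n.Partition, #{x ∈ l.parts.toFinset | k < x} := by
        simp only [card_filter]
        rw [sum_comm]
        refine sum_congr rfl fun l _ => ?_
        rw [← card_filter, ← card_filter]
        congr 1
        ext v
        simp only [mem_filter, mem_Ioc, Multiset.mem_toFinset]
        exact ⟨fun h => ⟨h.2, h.1.1⟩,
          fun h => ⟨⟨h.2, Nat.Partition.le_of_mem_parts h.1⟩, h.1⟩⟩

theorem sumNumPartitions_le (n : ℕ) :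
    sumNumPartitions n ≤ Nat.sqrt (2 * n) * numPartitions n := by
  calc sumNumPartitions n = ∑ l : n.Partition, #{x ∈ l.parts.toFinset | 0 < x} := by
        simpa using sumNumPartitions_sub_eq_sum_card 0 n
    _ ≤ ∑ _l : n.Partition, Nat.sqrt (2 * n) :=
        sum_le_sum fun l _ => (card_filter_le _ _).trans l.card_toFinset_parts_le_sqrt
    _ = Nat.sqrt (2 * n) * numPartitions n := by simp [numPartitions, mul_comm]

theorem card_exists_mem_parts_gt_le (k n : ℕ) :
    Nat.card {l : n.Partition // ∃ x ∈ l.parts, k < x} ≤ sumNumPartitions (n - k) := by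
  classical
  rw [Nat.card_eq_fintype_card, Fintype.card_subtype, sumNumPartitions_sub_eq_sum_card,
    card_eq_sum_ones, sum_filter]
  refine sum_le_sum fun l _ => ?_
  split_ifs with h
  · obtain ⟨x, hx, hkx⟩ := h
    exact card_pos.2 ⟨x, by simp [hx, hkx]⟩
  · exact Nat.zero_le _

theorem add_one_mul_sumNumPartitions_le {j n : ℕ} (hj : j ≤ n) :
    (Nat.sqrt (2 * n) + 1) * sumNumPartitions j ≤
      Nat.sqrt (2 * n) * sumNumPartitions (j + 1) := by
  have h := (sumNumPartitions_le j).trans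
    (Nat.mul_le_mul_right _ (Nat.sqrt_le_sqrt (by omega : 2 * j ≤ 2 * n)))
  rw [sumNumPartitions_succ]
  linarith

theorem add_one_pow_mul_sumNumPartitions_le {j k n : ℕ} (h : j + k ≤ n) :
    (Nat.sqrt (2 * n) + 1) ^ k * sumNumPartitions j ≤
      Nat.sqrt (2 * n) ^ k * sumNumPartitions (j + k) := by
  induction k with
  | zero => simp
  | succ k ih =>
    calc (Nat.sqrt (2 * n) + 1) ^ (k + 1) * sumNumPartitions j
        = (Nat.sqrt (2 * n) + 1) * ((Nat.sqrt (2 * n) + 1) ^ k * sumNumPartitions j) := by ring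
      _ ≤ (Nat.sqrt (2 * n) + 1) * (Nat.sqrt (2 * n) ^ k * sumNumPartitions (j + k)) := by
        grw [ih (by omega)]
      _ = Nat.sqrt (2 * n) ^ k * ((Nat.sqrt (2 * n) + 1) * sumNumPartitions (j + k)) := by ring
      _ ≤ Nat.sqrt (2 * n) ^ k * (Nat.sqrt (2 * n) * sumNumPartitions (j + k + 1)) := by
        grw [add_one_mul_sumNumPartitions_le (by omega : j + k ≤ n)]
      _ = Nat.sqrt (2 * n) ^ (k + 1) * sumNumPartitions (j + (k + 1)) := by
        rw [← add_assoc]; ring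

theorem card_exists_mem_parts_gt_mul_le (k n : ℕ) :
    Nat.card {l : n.Partition // ∃ x ∈ l.parts, k < x} * (Nat.sqrt (2 * n) + 1) ^ k ≤
      Nat.sqrt (2 * n) ^ (k + 1) * numPartitions n := by
  rcases le_or_gt k n with hkn | hnk
  · calc Nat.card {l : n.Partition // ∃ x ∈ l.parts, k < x} * (Nat.sqrt (2 * n) + 1) ^ k
        ≤ (Nat.sqrt (2 * n) + 1) ^ k * sumNumPartitions (n - k) := by
          rw [mul_comm]; grw [card_exists_mem_parts_gt_le]
      _ ≤ Nat.sqrt (2 * n) ^ k * sumNumPartitions n := by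
          simpa [Nat.sub_add_cancel hkn] using
            add_one_pow_mul_sumNumPartitions_le (j := n - k) (k := k) (by omega)
      _ ≤ Nat.sqrt (2 * n) ^ k * (Nat.sqrt (2 * n) * numPartitions n) := by
          grw [sumNumPartitions_le]
      _ = Nat.sqrt (2 * n) ^ (k + 1) * numPartitions n := by ring
  · have := card_exists_mem_parts_gt_le k n
    rw [Nat.sub_eq_zero_of_le hnk.le, sumNumPartitions, range_zero, sum_empty,
      Nat.le_zero] at this
    simp [this]

theorem mul_pow_succ_lt_add_one_pow {a S : ℝ} (ha : 0 < a) (hS : 0 < S) {M : ℕ}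
    (h : log (a * S) * (S + 1) < M) : a * S ^ (M + 1) < (S + 1) ^ M := by
  have hlog : 1 / (S + 1) ≤ log (S + 1) - log S := by
    have := one_sub_inv_le_log_of_pos (by positivity : 0 < (S + 1) / S)
    rwa [log_div (by positivity) hS.ne', inv_div, one_sub_div (by positivity),
      add_sub_cancel_left] at this
  have hM : log (a * S) < M * (log (S + 1) - log S) := by
    calc log (a * S) < M / (S + 1) := by rwa [lt_div_iff₀ (by positivity)]
      _ = M * (1 / (S + 1)) := by ring
      _ ≤ M * (log (S + 1) - log S) := by gcongr
  rw [← log_lt_log_iff (by positivity) (by positivity), log_mul ha.ne' (by positivity),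
    log_pow, log_pow, Nat.cast_add_one]
  rw [log_mul ha.ne' hS.ne'] at hM
  linarith

theorem log_mul_mul_add_one_lt_floor {n : ℕ} {s : ℝ} (hn : 144 ≤ n) (hs1 : 1 ≤ s)
    (hs : s * s ≤ 2 * n) : log (n * s) * (s + 1) < ⌊4 * √n * log n⌋₊ := by
  have hn' : (144 : ℝ) ≤ n := by exact_mod_cast hn
  have hR : 12 ≤ √n := le_sqrt_of_sq_le (by linarith)
  have hRR : √n * √n = n := mul_self_sqrt (by positivity)
  have hL : 1 ≤ log n := by
    rw [le_log_iff_exp_le (by positivity)]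
    linarith [exp_one_lt_d9]
  have hsR : s + 1 ≤ 3 / 2 * √n := by nlinarith
  have hlog : log (n * s) ≤ 2 * log n := by
    rw [← log_rpow (by positivity)]
    exact log_le_log (by positivity) (by rw [rpow_two]; nlinarith)
  have hM := Nat.lt_floor_add_one (4 * √n * log n)
  calc log (n * s) * (s + 1) ≤ 2 * log n * (3 / 2 * √n) := by gcongr
    _ < ⌊4 * √n * log n⌋₊ := by nlinarith

theorem mul_sqrt_pow_succ_lt {n : ℕ} (hn : 144 ≤ n) :
    (n : ℝ) * Nat.sqrt (2 * n) ^ (⌊4 * √n * log n⌋₊ + 1) <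
      (Nat.sqrt (2 * n) + 1) ^ ⌊4 * √n * log n⌋₊ := by
  have hs1 : (1 : ℝ) ≤ Nat.sqrt (2 * n) := by exact_mod_cast Nat.sqrt_pos.2 (by omega)
  have hs : (Nat.sqrt (2 * n) : ℝ) * Nat.sqrt (2 * n) ≤ 2 * n := by
    exact_mod_cast Nat.sqrt_le (2 * n)
  exact mul_pow_succ_lt_add_one_pow (by positivity) (by positivity)
    (log_mul_mul_add_one_lt_floor hn hs1 hs)

/-- For all sufficiently large `n`, fewer than `p(n)/n` partitions of `n`
have largest part greater than `4·√n·log n`. -/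
theorem partitions_large_part_rare :
    ∀ᶠ n : ℕ in atTop,
      (Nat.card {lam : Nat.Partition n //
          ∃ x ∈ lam.parts, 4 * Real.sqrt n * Real.log n < (x : ℝ)} : ℝ) <
        (numPartitions n : ℝ) / n := by
  filter_upwards [eventually_ge_atTop 144] with n hn
  have hcard : Nat.card {lam : n.Partition // ∃ x ∈ lam.parts, 4 * √n * log n < (x : ℝ)} =
      Nat.card {lam : n.Partition // ∃ x ∈ lam.parts, ⌊4 * √n * log n⌋₊ < x} := by
    simp_rw [Nat.floor_lt (by positivity : 0 ≤ 4 * √n * log n)]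
  have hcount := card_exists_mem_parts_gt_mul_le ⌊4 * √n * log n⌋₊ n
  have hkey := mul_sqrt_pow_succ_lt hn
  have hp : 0 < numPartitions n := Fintype.card_pos
  set M := ⌊4 * √n * log n⌋₊
  set s := Nat.sqrt (2 * n)
  set A := Nat.card {lam : n.Partition // ∃ x ∈ lam.parts, M < x}
  rw [hcard, lt_div_iff₀ (by positivity)]
  refine lt_of_mul_lt_mul_right ?_ (by positivity : (0 : ℝ) ≤ (s + 1) ^ M)
  calc (A : ℝ) * n * (s + 1) ^ M = n * (A * (s + 1) ^ M) := by ring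
    _ ≤ n * (s ^ (M + 1) * numPartitions n) :=
        mul_le_mul_of_nonneg_left (by exact_mod_cast hcount) (by positivity)
    _ = numPartitions n * (n * s ^ (M + 1)) := by ring
    _ < numPartitions n * (s + 1) ^ M := by gcongr
end

section
/- For all real constants c1, c2, c3, δ > 0 there exists γ > 0 such that the following holds for all sufficiently large positive integers n. Suppose λ_1, …, λ_m are pairwise distinct partitions of n, each of which satisfies: (I) its largest part and its number of parts both lie strictly between c1·√n·log n and c2·√n·log n; (II) at most n^{1−δ} cells (j, i) of its Ferrers diagram satisfy j > 0.1·c1·√n·log n or i > 0.1·c1·√n·log n; and (III) it has at least c3·√n parts of size at least c3·√n. Suppose D_1, …, D_m are pairwise non-overlapping translates of the Ferrers diagrams of λ_1, …, λ_m. Then for every axis-parallel square A of side 0.8·c1·√n·log n, the number of cells in A covered by D_1 ∪ … ∪ D_m is at most γ·n·log n. -/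
open Filter Real

/-!
Each diagram contains the `c₃√n × c₃√n` square at its apex (III), so two apexes are at
sup-distance at least `c₃√n - 1`; as the diagrams are at most `c₂√n log n` wide and tall,
only `O(log² n)` of them meet the square `A`, and by (II) each of these covers at most
`n^{1-δ}` cells of `A` unless it covers a cell of `A` within `0.1·c₁√n log n` of its apex.
For two such near diagrams the long bottom row of one and the long left column of the other
(I) would cross unless their apexes are ordered the same way in both coordinates, so the sums
of the apex coordinates are `(c₃√n - 1)`-separated in a window of length `O(√n log n)`: only
`O(log n)` diagrams are near, and each covers at most `n` cells.
-/

open Function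

theorem Multiset.sum_Icc_countP_le_sum (s : Multiset ℕ) (N : ℕ) :
    ∑ j ∈ Finset.Icc (1 : ℤ) N, s.countP (fun x : ℕ => j ≤ x) ≤ s.sum := by
  induction s using Multiset.induction_on with
  | empty => simp
  | cons x s ih =>
    simp only [Multiset.countP_cons, Finset.sum_add_distrib, Finset.sum_boole, Multiset.sum_cons,
      Nat.cast_id]
    have hx : ((Finset.Icc (1 : ℤ) N).filter fun j => j ≤ (x : ℤ)).card ≤ x := by
      calc _ ≤ (Finset.Icc (1 : ℤ) x).card := Finset.card_le_card fun j hj => by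
            simp only [Finset.mem_filter, Finset.mem_Icc] at hj ⊢; omega
        _ = x := by simp
    omega

theorem le_abs_add_of_mul_pos {x y B : ℝ} (hxy : 0 < x * y) (h : B ≤ |x| ∨ B ≤ |y|) :
    B ≤ |x + y| := by
  rw [(abs_add_eq_add_abs_iff x y).2 ((pos_and_pos_or_neg_and_neg_of_mul_pos hxy).imp
    (And.imp le_of_lt le_of_lt) (And.imp le_of_lt le_of_lt))]
  rcases h with h | h <;> linarith [abs_nonneg x, abs_nonneg y]

theorem exists_ge_ge_of_abs_sub_lt {a a' : ℤ} {r : ℝ} (h : |(a : ℝ) - a'| < r - 1) :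
    ∃ p : ℤ, a ≤ p ∧ a' ≤ p ∧ (p - a + 1 : ℝ) ≤ r ∧ (p - a' + 1 : ℝ) ≤ r := by
  rw [abs_lt] at h
  rcases le_total a a' with hle | hle
  · exact ⟨a', hle, le_rfl, by linarith, by linarith⟩
  · exact ⟨a, le_rfl, hle, by linarith, by linarith⟩

theorem mul_div_sub_one_add_one_le {k c x y : ℝ} (hk : 0 ≤ k) (hx : 0 < x) (hcx : 2 ≤ c * x)
    (hy : 1 ≤ y) : k * x * y / (c * x - 1) + 1 ≤ (2 * k / c + 1) * y := by
  have hc : 0 < c := pos_of_mul_pos_left (by linarith) hx.le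
  calc k * x * y / (c * x - 1) + 1 ≤ k * x * y / (c * x / 2) + 1 := by
        gcongr
        linarith
    _ = 2 * k / c * y + 1 := by field_simp
    _ ≤ (2 * k / c + 1) * y := by linarith

section Separated

variable {ι : Type*} {T : Finset ι} {B : ℝ}

theorem abs_sub_lt_of_floor_div_eq {x y lo : ℝ} (hB : 0 < B) (hx : lo ≤ x) (hy : lo ≤ y)
    (h : ⌊(x - lo) / B⌋₊ = ⌊(y - lo) / B⌋₊) : |x - y| < B := by
  have h' : ⌊(x - lo) / B⌋ = ⌊(y - lo) / B⌋ := by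
    rw [← Int.natCast_floor_eq_floor (div_nonneg (sub_nonneg.2 hx) hB.le),
      ← Int.natCast_floor_eq_floor (div_nonneg (sub_nonneg.2 hy) hB.le), h]
  have := Int.abs_sub_lt_one_of_floor_eq_floor h'
  rwa [← sub_div, sub_sub_sub_cancel_right, abs_div, abs_of_pos hB, div_lt_one hB] at this

theorem floor_div_mem_range {x lo hi : ℝ} (hB : 0 < B) (hx : x ∈ Set.Icc lo hi) :
    ⌊(x - lo) / B⌋₊ ∈ Finset.range (⌊(hi - lo) / B⌋₊ + 1) :=
  Finset.mem_range_succ_iff.2 <| Nat.floor_le_floor <|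
    div_le_div_of_nonneg_right (by linarith [hx.2]) hB.le

theorem natCast_floor_div_add_one_le {lo hi : ℝ} (hB : 0 < B) (hlohi : lo ≤ hi) :
    ((⌊(hi - lo) / B⌋₊ + 1 : ℕ) : ℝ) ≤ (hi - lo) / B + 1 := by
  push_cast
  gcongr
  exact Nat.floor_le (div_nonneg (sub_nonneg.2 hlohi) hB.le)

theorem card_le_of_le_abs_sub {f : ι → ℝ} {lo hi : ℝ} (hB : 0 < B) (hlohi : lo ≤ hi)
    (hf : ∀ t ∈ T, f t ∈ Set.Icc lo hi)
    (hsep : ∀ s ∈ T, ∀ t ∈ T, s ≠ t → B ≤ |f s - f t|) :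
    (T.card : ℝ) ≤ (hi - lo) / B + 1 := by
  have hcard : T.card ≤ ⌊(hi - lo) / B⌋₊ + 1 := by
    simpa using Finset.card_le_card_of_injOn (fun t => ⌊(f t - lo) / B⌋₊)
      (fun t ht => floor_div_mem_range hB (hf t ht)) fun s hs t ht hst => by
        by_contra hne
        exact (hsep s hs t ht hne).not_gt
          (abs_sub_lt_of_floor_div_eq hB (hf s hs).1 (hf t ht).1 hst)
  exact (Nat.cast_le.2 hcard).trans (natCast_floor_div_add_one_le hB hlohi)

theorem card_le_of_le_abs_sub_or_le_abs_sub {f g : ι → ℝ} {lo₁ hi₁ lo₂ hi₂ : ℝ} (hB : 0 < B)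
    (hlohi₁ : lo₁ ≤ hi₁) (hlohi₂ : lo₂ ≤ hi₂) (hf : ∀ t ∈ T, f t ∈ Set.Icc lo₁ hi₁)
    (hg : ∀ t ∈ T, g t ∈ Set.Icc lo₂ hi₂)
    (hsep : ∀ s ∈ T, ∀ t ∈ T, s ≠ t → B ≤ |f s - f t| ∨ B ≤ |g s - g t|) :
    (T.card : ℝ) ≤ ((hi₁ - lo₁) / B + 1) * ((hi₂ - lo₂) / B + 1) := by
  have hcard : T.card ≤ (⌊(hi₁ - lo₁) / B⌋₊ + 1) * (⌊(hi₂ - lo₂) / B⌋₊ + 1) := by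
    simpa using Finset.card_le_card_of_injOn
      (fun t => (⌊(f t - lo₁) / B⌋₊, ⌊(g t - lo₂) / B⌋₊))
      (fun t ht => Finset.mem_product.2 ⟨floor_div_mem_range hB (hf t ht),
        floor_div_mem_range hB (hg t ht)⟩) fun s hs t ht hst => by
        by_contra hne
        obtain ⟨hst₁, hst₂⟩ := Prod.ext_iff.1 hst
        rcases hsep s hs t ht hne with h | h
        · exact h.not_gt (abs_sub_lt_of_floor_div_eq hB (hf s hs).1 (hf t ht).1 hst₁)
        · exact h.not_gt (abs_sub_lt_of_floor_div_eq hB (hg s hs).1 (hg t ht).1 hst₂)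
  refine (Nat.cast_le.2 hcard).trans ?_
  rw [Nat.cast_mul]
  exact mul_le_mul (natCast_floor_div_add_one_le hB hlohi₁)
    (natCast_floor_div_add_one_le hB hlohi₂) (Nat.cast_nonneg _) (by positivity)

end Separated

def Nat.Partition.colHeight {n : ℕ} (lam : Nat.Partition n) (j : ℤ) : ℕ :=
  lam.parts.countP fun x : ℕ => j ≤ x

def Nat.Partition.HasSquare {n : ℕ} (lam : Nat.Partition n) (r : ℝ) : Prop :=
  r ≤ ((lam.parts.filter fun x : ℕ => r ≤ x).card : ℝ)

section Ferrers

variable {n : ℕ} {lam : Nat.Partition n}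

theorem mem_ferrersDiagram {j i : ℤ} :
    (j, i) ∈ ferrersDiagram lam ↔ 1 ≤ j ∧ 1 ≤ i ∧ i ≤ lam.colHeight j := by
  -- `ferrersDiagram` filters `lam.parts` after coercing it to `Multiset ℤ` through `bind`.
  show _ ∧ _ ∧ _ ≤ _ ↔ _
  rw [show (do let a ← lam.parts; pure (a : ℤ) : Multiset ℤ) = lam.parts.map (↑) from
    Multiset.bind_singleton _ _, Multiset.filter_map, Multiset.card_map,
    ← Multiset.countP_eq_card_filter]
  rfl

theorem Nat.Partition.colHeight_le_card (j : ℤ) : lam.colHeight j ≤ Multiset.card lam.parts :=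
  Multiset.countP_le_card _ _

theorem exists_le_part_of_mem_ferrersDiagram {j i : ℤ} (h : (j, i) ∈ ferrersDiagram lam) :
    (∃ x ∈ lam.parts, j ≤ x) ∧ i ≤ (Multiset.card lam.parts : ℕ) := by
  obtain ⟨-, hi, hij⟩ := mem_ferrersDiagram.1 h
  exact ⟨Multiset.countP_pos.1 (show 0 < lam.colHeight j by omega),
    hij.trans (by exact_mod_cast lam.colHeight_le_card j)⟩

theorem mk_one_mem_ferrersDiagram {j : ℤ} {x : ℕ} (hj : 1 ≤ j) (hx : x ∈ lam.parts)
    (hjx : j ≤ x) : (j, 1) ∈ ferrersDiagram lam :=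
  mem_ferrersDiagram.2 ⟨hj, le_rfl, by exact_mod_cast Multiset.countP_pos.2 ⟨x, hx, hjx⟩⟩

theorem one_mk_mem_ferrersDiagram {i : ℤ} (hi : 1 ≤ i)
    (hic : i ≤ (Multiset.card lam.parts : ℕ)) : (1, i) ∈ ferrersDiagram lam := by
  refine mem_ferrersDiagram.2 ⟨le_rfl, hi, hic.trans ?_⟩
  rw [Nat.Partition.colHeight, Multiset.countP_eq_card.2 fun x hx => ?_]
  exact_mod_cast lam.parts_pos hx

theorem Nat.Partition.HasSquare.mem_ferrersDiagram {r : ℝ} (hr : lam.HasSquare r) {j i : ℤ}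
    (hj : 1 ≤ j) (hi : 1 ≤ i) (hjr : (j : ℝ) ≤ r) (hir : (i : ℝ) ≤ r) :
    (j, i) ∈ ferrersDiagram lam := by
  refine _root_.mem_ferrersDiagram.2 ⟨hj, hi, ?_⟩
  have hsub : (lam.parts.filter fun x : ℕ => r ≤ x).card ≤ lam.colHeight j := by
    rw [Nat.Partition.colHeight, Multiset.countP_eq_card_filter]
    refine Multiset.card_le_card (Multiset.monotone_filter_right _ fun x hx => ?_)
    exact_mod_cast hjr.trans hx
  have : (i : ℝ) ≤ lam.colHeight j := hir.trans (hr.trans (by exact_mod_cast hsub))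
  exact_mod_cast this

theorem ferrersDiagram_subset_biUnion :
    ferrersDiagram lam ⊆ ⋃ j ∈ Finset.Icc (1 : ℤ) n, {j} ×ˢ Set.Icc 1 (lam.colHeight j : ℤ) := by
  rintro ⟨j, i⟩ h
  obtain ⟨hj, hi, hij⟩ := mem_ferrersDiagram.1 h
  obtain ⟨⟨x, hx, hjx⟩, -⟩ := exists_le_part_of_mem_ferrersDiagram h
  have hxn : (x : ℤ) ≤ n := by exact_mod_cast Nat.Partition.le_of_mem_parts hx
  simp only [Set.mem_iUnion, Finset.mem_Icc, Set.mem_prod, Set.mem_singleton_iff, Set.mem_Icc]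
  exact ⟨j, ⟨hj, hjx.trans hxn⟩, rfl, hi, hij⟩

theorem ferrersDiagram_finite : (ferrersDiagram lam).Finite :=
  (Set.toFinite _).subset ferrersDiagram_subset_biUnion

theorem ncard_ferrersDiagram_le : (ferrersDiagram lam).ncard ≤ n := by
  calc (ferrersDiagram lam).ncard
      ≤ (⋃ j ∈ Finset.Icc (1 : ℤ) n, {j} ×ˢ Set.Icc 1 (lam.colHeight j : ℤ)).ncard :=
        Set.ncard_le_ncard ferrersDiagram_subset_biUnion (Set.toFinite _)
    _ ≤ ∑ j ∈ Finset.Icc (1 : ℤ) n, ({j} ×ˢ Set.Icc 1 (lam.colHeight j : ℤ)).ncard :=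
        Finset.set_ncard_biUnion_le _ _
    _ = ∑ j ∈ Finset.Icc (1 : ℤ) n, lam.colHeight j := by
        refine Finset.sum_congr rfl fun j _ => ?_
        rw [Set.ncard_prod, Set.ncard_singleton, one_mul, ← Finset.coe_Icc, Set.ncard_coe_finset,
          Int.card_Icc]
        omega
    _ ≤ n := (Multiset.sum_Icc_countP_le_sum lam.parts n).trans_eq lam.parts_sum

end Ferrers

section Placed

variable {n : ℕ} {lam : Nat.Partition n}

theorem mem_placedFerrers {a b : ℤ} {c : ℤ × ℤ} :
    c ∈ placedFerrers lam a b ↔ (c.1 - a + 1, c.2 - b + 1) ∈ ferrersDiagram lam := by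
  constructor
  · rintro ⟨d, hd, rfl⟩
    convert hd using 2 <;> ring
  · exact fun h => ⟨_, h, by ext <;> simp only <;> ring⟩

theorem ncard_inter_placedFerrers (A : Set (ℤ × ℤ)) (a b : ℤ) :
    (A ∩ placedFerrers lam a b).ncard =
      (ferrersDiagram lam ∩ {c | (c.1 + a - 1, c.2 + b - 1) ∈ A}).ncard := by
  rw [Set.inter_comm, placedFerrers, ← Set.image_inter_preimage,
    Set.ncard_image_of_injective _ fun c d h => by simp only [Prod.ext_iff] at h ⊢; omega]
  rfl

theorem ncard_inter_placedFerrers_le (A : Set (ℤ × ℤ)) (a b : ℤ) :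
    (A ∩ placedFerrers lam a b).ncard ≤ n := by
  rw [ncard_inter_placedFerrers]
  exact (Set.ncard_le_ncard Set.inter_subset_left ferrersDiagram_finite).trans
    ncard_ferrersDiagram_le

theorem not_disjoint_placedFerrers_of_hook {n' : ℕ} {mu : Nat.Partition n'} {a b a' b' : ℤ}
    {x : ℕ} (hx : x ∈ lam.parts) (ha : a ≤ a') (hax : a' - a < x) (hb : b' ≤ b)
    (hbm : b - b' < (Multiset.card mu.parts : ℕ)) :
    ¬ Disjoint (placedFerrers lam a b) (placedFerrers mu a' b') := by
  refine Set.not_disjoint_iff.2 ⟨(a', b), mem_placedFerrers.2 ?_, mem_placedFerrers.2 ?_⟩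
  · rw [sub_self, zero_add]
    exact mk_one_mem_ferrersDiagram (by omega) hx (by omega)
  · rw [sub_self, zero_add]
    exact one_mk_mem_ferrersDiagram (by omega) (by omega)

theorem Nat.Partition.HasSquare.mem_placedFerrers {r : ℝ} (hr : lam.HasSquare r) {a b p q : ℤ}
    (hp : a ≤ p) (hpr : (p - a + 1 : ℝ) ≤ r) (hq : b ≤ q) (hqr : (q - b + 1 : ℝ) ≤ r) :
    (p, q) ∈ placedFerrers lam a b :=
  _root_.mem_placedFerrers.2 <| hr.mem_ferrersDiagram (by omega) (by omega)
    (by push_cast; linarith) (by push_cast; linarith)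

theorem Nat.Partition.HasSquare.le_abs_sub_or_le_abs_sub {n' : ℕ} {mu : Nat.Partition n'}
    {r : ℝ} (hlam : lam.HasSquare r) (hmu : mu.HasSquare r) {a b a' b' : ℤ}
    (h : Disjoint (placedFerrers lam a b) (placedFerrers mu a' b')) :
    r - 1 ≤ |(a : ℝ) - a'| ∨ r - 1 ≤ |(b : ℝ) - b'| := by
  by_contra! hne
  obtain ⟨p, hap, ha'p, hpr, hpr'⟩ := exists_ge_ge_of_abs_sub_lt hne.1
  obtain ⟨q, hbq, hb'q, hqr, hqr'⟩ := exists_ge_ge_of_abs_sub_lt hne.2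
  exact Set.not_disjoint_iff.2 ⟨(p, q), hlam.mem_placedFerrers hap hpr hbq hqr,
    hmu.mem_placedFerrers ha'p hpr' hb'q hqr'⟩ h

end Placed

def cellSquare (a b : ℤ) (ℓ : ℝ) : Set (ℤ × ℤ) :=
  {c | (a : ℝ) ≤ c.1 ∧ (c.1 : ℝ) < a + ℓ ∧ (b : ℝ) ≤ c.2 ∧ (c.2 : ℝ) < b + ℓ}

theorem apex_mem_of_mem_cellSquare {α β j i a b : ℤ} {ℓ θ : ℝ} (hj : 1 ≤ j) (hi : 1 ≤ i)
    (hjθ : (j : ℝ) ≤ θ) (hiθ : (i : ℝ) ≤ θ) (h : (j + a - 1, i + b - 1) ∈ cellSquare α β ℓ) :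
    (a : ℝ) ∈ Set.Icc (α - θ) (α + ℓ) ∧ (b : ℝ) ∈ Set.Icc (β - θ) (β + ℓ) := by
  obtain ⟨h₁, h₂, h₃, h₄⟩ := h
  have hj' : (1 : ℝ) ≤ j := by exact_mod_cast hj
  have hi' : (1 : ℝ) ≤ i := by exact_mod_cast hi
  push_cast at h₁ h₂ h₃ h₄
  exact ⟨⟨by linarith, by linarith⟩, ⟨by linarith, by linarith⟩⟩

def MeetsNearApex (A : Set (ℤ × ℤ)) (θ : ℝ) {n : ℕ} (lam : Nat.Partition n) (a b : ℤ) : Prop :=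
  ∃ c ∈ ferrersDiagram lam, (c.1 : ℝ) ≤ θ ∧ (c.2 : ℝ) ≤ θ ∧ (c.1 + a - 1, c.2 + b - 1) ∈ A

section MeetsNearApex

variable {n : ℕ} {lam : Nat.Partition n} {a b : ℤ} {θ : ℝ}

theorem MeetsNearApex.apex_mem {α β : ℤ} {ℓ : ℝ}
    (h : MeetsNearApex (cellSquare α β ℓ) θ lam a b) :
    (a : ℝ) ∈ Set.Icc (α - θ) (α + ℓ) ∧ (b : ℝ) ∈ Set.Icc (β - θ) (β + ℓ) := by
  obtain ⟨⟨j, i⟩, hc, hjθ, hiθ, hA⟩ := h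
  obtain ⟨hj, hi, -⟩ := mem_ferrersDiagram.1 hc
  exact apex_mem_of_mem_cellSquare hj hi hjθ hiθ hA

theorem ncard_inter_placedFerrers_le_of_not_meetsNearApex {A : Set (ℤ × ℤ)}
    (h : ¬ MeetsNearApex A θ lam a b) :
    (A ∩ placedFerrers lam a b).ncard ≤
      (ferrersDiagram lam ∩ {c | θ < (c.1 : ℝ) ∨ θ < (c.2 : ℝ)}).ncard := by
  rw [ncard_inter_placedFerrers]
  refine Set.ncard_le_ncard (fun c ⟨hc, hA⟩ => ⟨hc, ?_⟩) (ferrersDiagram_finite.inter_of_left _)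
  by_contra hle
  simp only [Set.mem_ofPred_eq, not_or, not_lt] at hle
  exact h ⟨c, hc, hle.1, hle.2, hA⟩

end MeetsNearApex

def placedFamily {ι : Type*} {n : ℕ} (lam : ι → Nat.Partition n) (pos : ι → ℤ × ℤ) (t : ι) :
    Set (ℤ × ℤ) :=
  placedFerrers (lam t) (pos t).1 (pos t).2

section Family

variable {ι : Type*} {n : ℕ} {lam : ι → Nat.Partition n} {pos : ι → ℤ × ℤ} {α β : ℤ}
  {ℓ θ L M r : ℝ}

theorem not_le_and_le_of_meetsNearApex (hdisj : Pairwise (Disjoint on placedFamily lam pos))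
    (hlong : ∀ t, ∃ x ∈ (lam t).parts, L < x)
    (htall : ∀ t, L < (Multiset.card (lam t).parts : ℕ)) (hℓθ : ℓ + θ < L) {u v : ι}
    (huv : u ≠ v) (hu : MeetsNearApex (cellSquare α β ℓ) θ (lam u) (pos u).1 (pos u).2)
    (hv : MeetsNearApex (cellSquare α β ℓ) θ (lam v) (pos v).1 (pos v).2) :
    ¬ ((pos u).1 ≤ (pos v).1 ∧ (pos v).2 ≤ (pos u).2) := by
  rintro ⟨ha, hb⟩
  obtain ⟨⟨hau, -⟩, -, hbu⟩ := hu.apex_mem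
  obtain ⟨⟨-, hav⟩, hbv, -⟩ := hv.apex_mem
  obtain ⟨x, hx, hLx⟩ := hlong u
  have hax : ((pos v).1 - (pos u).1 : ℝ) < x := by linarith
  have hbm : ((pos u).2 - (pos v).2 : ℝ) < (Multiset.card (lam v).parts : ℕ) := by
    linarith [htall v]
  exact not_disjoint_placedFerrers_of_hook hx ha (by exact_mod_cast hax) hb
    (by exact_mod_cast hbm) (hdisj huv)

theorem le_abs_sub_of_meetsNearApex (hdisj : Pairwise (Disjoint on placedFamily lam pos))
    (hlong : ∀ t, ∃ x ∈ (lam t).parts, L < x)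
    (htall : ∀ t, L < (Multiset.card (lam t).parts : ℕ)) (hsq : ∀ t, (lam t).HasSquare r)
    (hℓθ : ℓ + θ < L) {u v : ι} (huv : u ≠ v)
    (hu : MeetsNearApex (cellSquare α β ℓ) θ (lam u) (pos u).1 (pos u).2)
    (hv : MeetsNearApex (cellSquare α β ℓ) θ (lam v) (pos v).1 (pos v).2) :
    r - 1 ≤ |((pos u).1 + (pos u).2 : ℝ) - ((pos v).1 + (pos v).2)| := by
  have huv' := not_le_and_le_of_meetsNearApex hdisj hlong htall hℓθ huv hu hv
  have hvu := not_le_and_le_of_meetsNearApex hdisj hlong htall hℓθ huv.symm hv hu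
  have hmul : 0 < ((pos u).1 - (pos v).1) * ((pos u).2 - (pos v).2) := by
    rcases lt_trichotomy (pos u).1 (pos v).1 with h | h | h
    · exact mul_pos_of_neg_of_neg (by omega) (by omega)
    · omega
    · exact mul_pos (by omega) (by omega)
  rw [show ((pos u).1 + (pos u).2 : ℝ) - ((pos v).1 + (pos v).2) =
    ((pos u).1 - (pos v).1) + ((pos u).2 - (pos v).2) by ring]
  exact le_abs_add_of_mul_pos (by exact_mod_cast hmul)
    ((hsq u).le_abs_sub_or_le_abs_sub (hsq v) (hdisj huv))

theorem card_le_of_forall_meetsNearApex (hdisj : Pairwise (Disjoint on placedFamily lam pos))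
    (hlong : ∀ t, ∃ x ∈ (lam t).parts, L < x)
    (htall : ∀ t, L < (Multiset.card (lam t).parts : ℕ)) (hsq : ∀ t, (lam t).HasSquare r)
    (hℓθ : ℓ + θ < L) (hℓθ₀ : 0 ≤ ℓ + θ) (hr : 1 < r) {T : Finset ι}
    (hT : ∀ t ∈ T, MeetsNearApex (cellSquare α β ℓ) θ (lam t) (pos t).1 (pos t).2) :
    (T.card : ℝ) ≤ 2 * (ℓ + θ) / (r - 1) + 1 := by
  have hcard := card_le_of_le_abs_sub (lo := α + β - 2 * θ) (hi := α + β + 2 * ℓ)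
    (by linarith) (by linarith) (fun t ht => ?_) fun u hu v hv huv =>
      le_abs_sub_of_meetsNearApex hdisj hlong htall hsq hℓθ huv (hT u hu) (hT v hv)
  · exact hcard.trans_eq (by ring)
  · obtain ⟨⟨ha, ha'⟩, hb, hb'⟩ := (hT t ht).apex_mem
    exact ⟨by linarith, by linarith⟩

theorem card_le_of_forall_inter_nonempty (hdisj : Pairwise (Disjoint on placedFamily lam pos))
    (hshort : ∀ t, ∀ x ∈ (lam t).parts, (x : ℝ) < M)
    (hlow : ∀ t, ((Multiset.card (lam t).parts : ℕ) : ℝ) < M) (hsq : ∀ t, (lam t).HasSquare r)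
    (hℓM : 0 ≤ ℓ + M) (hr : 1 < r) {T : Finset ι}
    (hT : ∀ t ∈ T, (cellSquare α β ℓ ∩ placedFamily lam pos t).Nonempty) :
    (T.card : ℝ) ≤ ((ℓ + M) / (r - 1) + 1) ^ 2 := by
  have hapex : ∀ t ∈ T, ((pos t).1 : ℝ) ∈ Set.Icc (α - M) (α + ℓ) ∧
      ((pos t).2 : ℝ) ∈ Set.Icc (β - M) (β + ℓ) := by
    intro t ht
    obtain ⟨_, hA, ⟨j, i⟩, hc, rfl⟩ := hT t ht
    obtain ⟨hj, hi, -⟩ := mem_ferrersDiagram.1 hc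
    obtain ⟨⟨x, hx, hjx⟩, hic⟩ := exists_le_part_of_mem_ferrersDiagram hc
    refine apex_mem_of_mem_cellSquare hj hi ?_ ?_ hA
    · exact le_trans (by exact_mod_cast hjx) (hshort t x hx).le
    · exact le_trans (by exact_mod_cast hic) (hlow t).le
  refine (card_le_of_le_abs_sub_or_le_abs_sub (by linarith) (by linarith) (by linarith)
    (fun t ht => (hapex t ht).1) (fun t ht => (hapex t ht).2) fun u _ v _ huv =>
      (hsq u).le_abs_sub_or_le_abs_sub (hsq v) (hdisj huv)).trans_eq ?_
  ring

theorem ncard_cellSquare_inter_iUnion_le [Fintype ι] {E : ℝ}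
    (hdisj : Pairwise (Disjoint on placedFamily lam pos))
    (hlong : ∀ t, ∃ x ∈ (lam t).parts, L < x)
    (htall : ∀ t, L < (Multiset.card (lam t).parts : ℕ))
    (hshort : ∀ t, ∀ x ∈ (lam t).parts, (x : ℝ) < M)
    (hlow : ∀ t, ((Multiset.card (lam t).parts : ℕ) : ℝ) < M) (hsq : ∀ t, (lam t).HasSquare r)
    (hfar : ∀ t, ((ferrersDiagram (lam t) ∩ {c | θ < (c.1 : ℝ) ∨ θ < (c.2 : ℝ)}).ncard : ℝ) ≤ E)
    (hℓθ : ℓ + θ < L) (hℓθ₀ : 0 ≤ ℓ + θ) (hℓM : 0 ≤ ℓ + M) (hr : 1 < r) (hE : 0 ≤ E) :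
    ((cellSquare α β ℓ ∩ ⋃ t, placedFamily lam pos t).ncard : ℝ) ≤
      (2 * (ℓ + θ) / (r - 1) + 1) * n + ((ℓ + M) / (r - 1) + 1) ^ 2 * E := by
  classical
  set A := cellSquare α β ℓ
  set S := Finset.univ.filter fun t => MeetsNearApex A θ (lam t) (pos t).1 (pos t).2
  set T := Finset.univ.filter fun t => (A ∩ placedFamily lam pos t).Nonempty
  have hpiece : ∀ t, ((A ∩ placedFamily lam pos t).ncard : ℝ) ≤
      (if t ∈ S then (n : ℝ) else 0) + (if t ∈ T then E else 0) := by
    intro t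
    by_cases hne : (A ∩ placedFamily lam pos t).Nonempty
    · have hT : t ∈ T := Finset.mem_filter.2 ⟨Finset.mem_univ t, hne⟩
      rw [if_pos hT]
      split_ifs with hS
      · have : ((A ∩ placedFamily lam pos t).ncard : ℝ) ≤ n := by
          exact_mod_cast ncard_inter_placedFerrers_le A _ _
        linarith
      · have hnear : ¬ MeetsNearApex A θ (lam t) (pos t).1 (pos t).2 := by simpa [S] using hS
        have hfar' : ((A ∩ placedFamily lam pos t).ncard : ℝ) ≤ E :=
          (Nat.cast_le.2 (ncard_inter_placedFerrers_le_of_not_meetsNearApex hnear)).trans (hfar t)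
        linarith
    · rw [Set.not_nonempty_iff_eq_empty.1 hne, Set.ncard_empty, Nat.cast_zero]
      positivity
  calc ((A ∩ ⋃ t, placedFamily lam pos t).ncard : ℝ)
      ≤ ∑ t, ((A ∩ placedFamily lam pos t).ncard : ℝ) := by
        rw [Set.inter_iUnion]
        exact_mod_cast Set.ncard_iUnion_le_of_fintype _
    _ ≤ ∑ t, ((if t ∈ S then (n : ℝ) else 0) + (if t ∈ T then E else 0)) :=
        Finset.sum_le_sum fun t _ => hpiece t
    _ = S.card * n + T.card * E := by
        simp [Finset.sum_add_distrib, Finset.sum_ite_mem]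
    _ ≤ (2 * (ℓ + θ) / (r - 1) + 1) * n + ((ℓ + M) / (r - 1) + 1) ^ 2 * E := by
        gcongr
        · exact card_le_of_forall_meetsNearApex hdisj hlong htall hsq hℓθ hℓθ₀ hr
            fun t ht => (Finset.mem_filter.1 ht).2
        · exact card_le_of_forall_inter_nonempty hdisj hshort hlow hsq hℓM hr
            fun t ht => (Finset.mem_filter.1 ht).2

end Family

theorem eventually_sq_mul_log_mul_rpow_le (K : ℝ) {δ : ℝ} (hδ : 0 < δ) :
    ∀ᶠ n : ℕ in atTop, (K * log n) ^ 2 * (n : ℝ) ^ (1 - δ) ≤ n * log n := by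
  have h := ((isLittleO_log_rpow_atTop hδ).const_mul_left (K ^ 2)).bound one_pos
  filter_upwards [tendsto_natCast_atTop_atTop.eventually h, eventually_gt_atTop 0] with n hn hn0
  have hn' : (0 : ℝ) < n := by exact_mod_cast hn0
  have hlog : 0 ≤ log n := Real.log_natCast_nonneg n
  rw [one_mul, Real.norm_of_nonneg (Real.rpow_nonneg hn'.le δ)] at hn
  calc (K * log n) ^ 2 * (n : ℝ) ^ (1 - δ) = (K ^ 2 * log n) * log n * (n : ℝ) ^ (1 - δ) := by
        ring
    _ ≤ (n : ℝ) ^ δ * log n * (n : ℝ) ^ (1 - δ) := by gcongr; exact (Real.le_norm_self _).trans hn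
    _ = n * log n := by rw [mul_right_comm, ← Real.rpow_add hn', add_sub_cancel, Real.rpow_one]

/-- For all `c1, c2, c3, δ > 0` there is `γ > 0` such that for all sufficiently
large `n`: any pairwise non-overlapping translates of Ferrers diagrams of
pairwise distinct partitions of `n` satisfying conditions (I), (II), (III)
cover at most `γ·n·log n` cells of any axis-parallel square of side
`0.8·c1·√n·log n`. -/
theorem covered_area_in_square_small :
    ∀ c1 c2 c3 δ : ℝ, 0 < c1 → 0 < c2 → 0 < c3 → 0 < δ →
    ∃ γ : ℝ, 0 < γ ∧ ∀ᶠ n : ℕ in atTop,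
      ∀ (m : ℕ) (lam : Fin m → Nat.Partition n) (pos : Fin m → ℤ × ℤ),
        Function.Injective lam →
        -- (I): largest part and number of parts strictly between the bounds
        (∀ t, (∃ x ∈ (lam t).parts, c1 * Real.sqrt n * Real.log n < (x : ℝ)) ∧
              (∀ x ∈ (lam t).parts, (x : ℝ) < c2 * Real.sqrt n * Real.log n) ∧
              c1 * Real.sqrt n * Real.log n < ((lam t).parts.card : ℝ) ∧
              ((lam t).parts.card : ℝ) < c2 * Real.sqrt n * Real.log n) →
        -- (II): at most n^(1-δ) cells far from the apex
        (∀ t, ((ferrersDiagram (lam t) ∩ {c : ℤ × ℤ |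
            0.1 * c1 * Real.sqrt n * Real.log n < (c.1 : ℝ) ∨
            0.1 * c1 * Real.sqrt n * Real.log n < (c.2 : ℝ)}).ncard : ℝ) ≤
              (n : ℝ) ^ ((1 : ℝ) - δ)) →
        -- (III): at least c3·√n parts of size at least c3·√n
        (∀ t, c3 * Real.sqrt n ≤
            (((lam t).parts.filter fun x : ℕ =>
              c3 * Real.sqrt n ≤ (x : ℝ)).card : ℝ)) →
        -- pairwise non-overlapping
        (Pairwise fun s t =>
          Disjoint (placedFerrers (lam s) (pos s).1 (pos s).2)
            (placedFerrers (lam t) (pos t).1 (pos t).2)) →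
        -- every axis-parallel square of side 0.8·c1·√n·log n
        ∀ a b : ℤ,
          ((({c : ℤ × ℤ |
                (a : ℝ) ≤ (c.1 : ℝ) ∧
                (c.1 : ℝ) < (a : ℝ) + 0.8 * c1 * Real.sqrt n * Real.log n ∧
                (b : ℝ) ≤ (c.2 : ℝ) ∧
                (c.2 : ℝ) < (b : ℝ) + 0.8 * c1 * Real.sqrt n * Real.log n}) ∩
              ⋃ t, placedFerrers (lam t) (pos t).1 (pos t).2).ncard : ℝ) ≤
            γ * n * Real.log n := by
  intro c1 c2 c3 δ hc1 hc2 hc3 hδ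
  set K := 2 * (0.8 * c1 + c2) / c3 + 1
  refine ⟨3.6 * c1 / c3 + 2, by positivity, ?_⟩
  filter_upwards [(tendsto_log_atTop.comp tendsto_natCast_atTop_atTop).eventually_ge_atTop 1,
    ((tendsto_sqrt_atTop.comp tendsto_natCast_atTop_atTop).const_mul_atTop hc3).eventually_ge_atTop
      2,
    eventually_sq_mul_log_mul_rpow_le K hδ] with n hlog hsqrt hpow
  intro m lam pos _ hI hII hIII hdisj a b
  simp only [Function.comp_apply] at hlog hsqrt
  have hsqrt₀ : 0 < √(n : ℝ) := pos_of_mul_pos_right (by linarith) hc3.le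
  have hL : 0 < c1 * √n * log n := mul_pos (mul_pos hc1 hsqrt₀) (by linarith)
  have hcover := ncard_cellSquare_inter_iUnion_le (α := a) (β := b)
    (ℓ := 0.8 * c1 * √n * log n) (θ := 0.1 * c1 * √n * log n) (L := c1 * √n * log n)
    (M := c2 * √n * log n) hdisj (fun t => (hI t).1) (fun t => (hI t).2.2.1)
    (fun t => (hI t).2.1) (fun t => (hI t).2.2.2) hIII hII (by linarith) (by positivity)
    (by positivity) (by linarith) (by positivity)
  have hnear := mul_div_sub_one_add_one_le (k := 1.8 * c1) (by positivity) hsqrt₀ hsqrt hlog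
  have hmeet := mul_div_sub_one_add_one_le (k := 0.8 * c1 + c2) (by positivity) hsqrt₀ hsqrt hlog
  have hmeet₀ : 0 ≤ (0.8 * c1 + c2) * √n * log n / (c3 * √n - 1) + 1 :=
    add_nonneg (div_nonneg (by positivity) (by linarith)) zero_le_one
  refine hcover.trans ?_
  calc _ = (1.8 * c1 * √n * log n / (c3 * √n - 1) + 1) * n +
        ((0.8 * c1 + c2) * √n * log n / (c3 * √n - 1) + 1) ^ 2 * (n : ℝ) ^ (1 - δ) := by ring
    _ ≤ (2 * (1.8 * c1) / c3 + 1) * log n * n + (K * log n) ^ 2 * (n : ℝ) ^ (1 - δ) := by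
        gcongr
    _ ≤ (2 * (1.8 * c1) / c3 + 1) * log n * n + n * log n := by gcongr
    _ = _ := by ring
end

section
/- Let k be a positive integer, and let λ and μ be partitions (of arbitrary positive integers) each having at least k parts of size at least k. Let D be a translate of the Ferrers diagram of λ with apex at (a1, b1), and let E be a translate of the Ferrers diagram of μ with apex at (a2, b2), where a1 ≤ a2 and b1 ≤ b2. If D and E are non-overlapping, then a2 + b2 ≥ a1 + b1 + k. -/
open Filter Real

/-! If the apexes were closer than `k` along the diagonal, the apex of `E` would lie in the
`k × k` square at the corner of `D`; both diagrams contain their corner `k × k` squares, so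
`D` and `E` would share that cell. -/

namespace Nat.Partition

variable {n k : ℕ} (lam : Nat.Partition n)

-- `ferrersDiagram` elaborates its filter over `lam.parts` lifted to a `Multiset ℤ`.
theorem mem_ferrersDiagram_iff (c : ℤ × ℤ) :
    c ∈ ferrersDiagram lam ↔
      1 ≤ c.1 ∧ 1 ≤ c.2 ∧ c.2 ≤ ((lam.parts.filter fun x : ℕ => c.1 ≤ (x : ℤ)).card : ℤ) := by
  simp only [ferrersDiagram, Set.mem_ofPred_eq, Bind.bind, Pure.pure, Multiset.bind_singleton,
    Multiset.filter_map, Multiset.card_map, Function.comp_def]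

theorem mem_placedFerrers_iff (a b : ℤ) (c : ℤ × ℤ) :
    c ∈ placedFerrers lam a b ↔ (c.1 - a + 1, c.2 - b + 1) ∈ ferrersDiagram lam := by
  constructor
  · rintro ⟨d, hd, rfl⟩
    convert hd using 2 <;> ring
  · intro h
    exact ⟨_, h, by ext <;> simp only <;> ring⟩

theorem mem_ferrersDiagram_of_le_of_le
    (hlam : k ≤ (lam.parts.filter fun x => k ≤ x).card)
    {j i : ℤ} (hj₁ : 1 ≤ j) (hjk : j ≤ k) (hi₁ : 1 ≤ i) (hik : i ≤ k) :
    (j, i) ∈ ferrersDiagram lam := by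
  have hsub : (lam.parts.filter fun x => k ≤ x) ≤ lam.parts.filter fun x : ℕ => j ≤ (x : ℤ) :=
    Multiset.monotone_filter_right lam.parts fun x hx => hjk.trans (by exact_mod_cast hx)
  have hcard := hlam.trans (Multiset.card_le_card hsub)
  refine (mem_ferrersDiagram_iff lam _).2 ⟨hj₁, hi₁, hik.trans ?_⟩
  exact_mod_cast hcard

theorem mem_placedFerrers_of_le_of_lt
    (hlam : k ≤ (lam.parts.filter fun x => k ≤ x).card)
    {a b x y : ℤ} (hax : a ≤ x) (hxk : x < a + k) (hby : b ≤ y) (hyk : y < b + k) :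
    (x, y) ∈ placedFerrers lam a b :=
  (mem_placedFerrers_iff lam a b _).2 <|
    mem_ferrersDiagram_of_le_of_le lam hlam (by omega) (by omega) (by omega) (by omega)

end Nat.Partition

theorem apex_diagonal_separation_general (k : ℕ)
    (n1 n2 : ℕ)
    (lam : Nat.Partition n1) (mu : Nat.Partition n2)
    (hlam : k ≤ (lam.parts.filter fun x => k ≤ x).card)
    (hmu : k ≤ (mu.parts.filter fun x => k ≤ x).card)
    (a1 b1 a2 b2 : ℤ) (ha : a1 ≤ a2) (hb : b1 ≤ b2)
    (hdisj : Disjoint (placedFerrers lam a1 b1) (placedFerrers mu a2 b2)) :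
    a1 + b1 + (k : ℤ) ≤ a2 + b2 := by
  by_contra! hclose
  have hD : (a2, b2) ∈ placedFerrers lam a1 b1 :=
    lam.mem_placedFerrers_of_le_of_lt hlam ha (by omega) hb (by omega)
  have hE : (a2, b2) ∈ placedFerrers mu a2 b2 :=
    mu.mem_placedFerrers_of_le_of_lt hmu le_rfl (by omega) le_rfl (by omega)
  exact Set.disjoint_left.mp hdisj hD hE

/-- If two partitions each have at least `k` parts of size at least `k`, and
translates of their Ferrers diagrams with apexes `(a1, b1)`, `(a2, b2)`
satisfying `a1 ≤ a2` and `b1 ≤ b2` are disjoint, then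
`a2 + b2 ≥ a1 + b1 + k`. -/
theorem apex_diagonal_separation (k : ℕ) (hk : 0 < k)
    (n1 n2 : ℕ) (hn1 : 0 < n1) (hn2 : 0 < n2)
    (lam : Nat.Partition n1) (mu : Nat.Partition n2)
    (hlam : k ≤ (lam.parts.filter fun x => k ≤ x).card)
    (hmu : k ≤ (mu.parts.filter fun x => k ≤ x).card)
    (a1 b1 a2 b2 : ℤ) (ha : a1 ≤ a2) (hb : b1 ≤ b2)
    (hdisj : Disjoint (placedFerrers lam a1 b1) (placedFerrers mu a2 b2)) :
    a1 + b1 + (k : ℤ) ≤ a2 + b2 :=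
  apex_diagonal_separation_general k n1 n2 lam mu hlam hmu a1 b1 a2 b2 ha hb hdisj
end

section
/- let k be a positive integer and s ≥ k a real number. Suppose D_1, …, D_m are pairwise non-overlapping translates of Ferrers diagrams of partitions λ_1, …, λ_m (of arbitrary positive integers, not necessarily distinct), where each λ_t has largest part greater than s, number of parts greater than s, and at least k parts of size at least k. If there exist integers a, b such that every apex (a_t, b_t) of D_t satisfies a ≤ a_t ≤ a + s and b ≤ b_t ≤ b + s, then m ≤ 2s/k + 1. -/
open Filter Real

lemma cell_mem_placed {n : ℕ} (lam : Nat.Partition n) (a b j i : ℤ)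
    (hj : 1 ≤ j) (hi : 1 ≤ i)
    (h : i ≤ ((lam.parts.filter (fun x => j ≤ (x : ℤ))).card : ℤ)) :
    (j + a - 1, i + b - 1) ∈ placedFerrers lam a b :=
  ⟨(j, i), ⟨hj, hi, h⟩, rfl⟩

lemma card_coe {n : ℕ} (lam : Nat.Partition n) (j : ℤ) :
    ((lam.parts.filter (fun x => j ≤ (x : ℤ))).card : ℤ)
      = (((lam.parts.filter (fun y : ℕ => j ≤ (y : ℤ))).card : ℕ) : ℤ) := by
  simp [Multiset.filter_map]

lemma packed (k : ℤ) : ∀ (n : ℕ) (S : Finset ℤ) (hS : S.Nonempty), S.card = n →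
    (∀ x ∈ S, ∀ y ∈ S, x < y → x + k ≤ y) →
    ((S.card : ℤ) - 1) * k ≤ S.max' hS - S.min' hS := by
  intro n
  induction n with
  | zero =>
    intro S hS hcard _
    rw [Finset.card_eq_zero] at hcard
    simp [hcard] at hS
  | succ n ih =>
    intro S hS hcard hsep
    rcases Nat.eq_zero_or_pos n with hn | hn
    · have hc1 : (S.card : ℤ) - 1 = 0 := by rw [hcard, hn]; norm_num
      rw [hc1, zero_mul]
      have := S.min'_le _ (S.max'_mem hS)
      omega
    · set M := S.max' hS with hM
      set S' := S.erase M with hS'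
      have hMmem := S.max'_mem hS
      have hcard' : S'.card = n := by rw [hS', Finset.card_erase_of_mem hMmem, hcard]; omega
      have hS'ne : S'.Nonempty := Finset.card_pos.mp (by omega)
      have hsub : S' ⊆ S := Finset.erase_subset _ _
      have hIH := ih S' hS'ne hcard' (fun x hx y hy => hsep x (hsub hx) y (hsub hy))
      have h1 : S.min' hS ≤ S'.min' hS'ne :=
        Finset.le_min' _ _ _ (fun y hy => S.min'_le _ (hsub hy))
      have hM'mem : S'.max' hS'ne ∈ S := hsub (S'.max'_mem hS'ne)
      have hne : S'.max' hS'ne ≠ M := Finset.ne_of_mem_erase (S'.max'_mem hS'ne)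
      have hlt : S'.max' hS'ne < M := lt_of_le_of_ne (S.le_max' _ hM'mem) hne
      have h2 : S'.max' hS'ne + k ≤ M := hsep _ hM'mem _ hMmem hlt
      rw [hcard'] at hIH
      rw [hcard]
      push_cast
      linarith

/-- If pairwise non-overlapping placed Ferrers diagrams of partitions, each with
largest part `> s`, number of parts `> s`, and at least `k` parts of size at
least `k`, all have their apexes in an `s × s` box, then there are at most
`2s/k + 1` of them. -/
theorem apexes_in_box_bound (k : ℕ) (hk : 0 < k) (s : ℝ) (hks : (k : ℝ) ≤ s)
    (m : ℕ) (ns : Fin m → ℕ) (hns : ∀ t, 0 < ns t)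
    (lam : (t : Fin m) → Nat.Partition (ns t)) (pos : Fin m → ℤ × ℤ)
    (hrow : ∀ t, ∃ x ∈ (lam t).parts, s < (x : ℝ))
    (hcol : ∀ t, s < ((lam t).parts.card : ℝ))
    (hmed : ∀ t, k ≤ ((lam t).parts.filter fun x => k ≤ x).card)
    (hdisj : Pairwise fun t u =>
      Disjoint (placedFerrers (lam t) (pos t).1 (pos t).2)
        (placedFerrers (lam u) (pos u).1 (pos u).2))
    (a b : ℤ)
    (hbox : ∀ t, (a : ℝ) ≤ ((pos t).1 : ℝ) ∧ ((pos t).1 : ℝ) ≤ (a : ℝ) + s ∧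
        (b : ℝ) ≤ ((pos t).2 : ℝ) ∧ ((pos t).2 : ℝ) ≤ (b : ℝ) + s) :
    (m : ℝ) ≤ 2 * s / k + 1 := by
  have hk0 : (0 : ℝ) < (k : ℝ) := by exact_mod_cast hk
  have hs0 : (0 : ℝ) < s := lt_of_lt_of_le hk0 hks
  rcases Nat.eq_zero_or_pos m with hm | hm
  · subst hm
    have : (0 : ℝ) ≤ 2 * s / k := by positivity
    simpa using by linarith
  set A : Fin m → ℤ := fun t => (pos t).1 with hA
  set B : Fin m → ℤ := fun t => (pos t).2 with hB
  have hfiltall : ∀ t' : Fin m,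
      ((lam t').parts.filter (fun y : ℕ => (1:ℤ) ≤ (y : ℤ))) = (lam t').parts := by
    intro t'
    apply Multiset.filter_eq_self.mpr
    intro y hy
    exact_mod_cast (lam t').parts_pos hy
  -- Step 1: no diagonal domination
  have step1 : ∀ t u : Fin m, t ≠ u → A t ≤ A u → B u ≤ B t → False := by
    intro t u htu h1 h2
    obtain ⟨x, hx, hxs⟩ := hrow t
    have hx1 : A u - A t + 1 ≤ (x : ℤ) := by
      have : ((A u - A t : ℤ) : ℝ) < (x : ℝ) := by
        push_cast
        have h1 := (hbox t).1
        have h2 := (hbox u).2.1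
        linarith
      exact_mod_cast this
    have hmem1 : ((A u : ℤ), (B t : ℤ)) ∈ placedFerrers (lam t) (A t) (B t) := by
      have hc : (1:ℤ) ≤ (((lam t).parts.filter (fun y => (A u - A t + 1 : ℤ) ≤ (y : ℤ))).card : ℤ) := by
        rw [card_coe]
        have hxmem : x ∈ (lam t).parts.filter (fun y : ℕ => A u - A t + 1 ≤ (y : ℤ)) :=
          Multiset.mem_filter.mpr ⟨hx, hx1⟩
        have : 0 < ((lam t).parts.filter (fun y : ℕ => A u - A t + 1 ≤ (y : ℤ))).card :=
          Multiset.card_pos_iff_exists_mem.mpr ⟨x, hxmem⟩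
        exact_mod_cast this
      have := cell_mem_placed (lam t) (A t) (B t) (A u - A t + 1) 1 (by omega) le_rfl hc
      convert this using 2 <;> ring
    have hmem2 : ((A u : ℤ), (B t : ℤ)) ∈ placedFerrers (lam u) (A u) (B u) := by
      have hc : B t - B u + 1 ≤ (((lam u).parts.filter (fun y => (1:ℤ) ≤ (y : ℤ))).card : ℤ) := by
        rw [card_coe, hfiltall u]
        have hr : ((B t - B u : ℤ) : ℝ) < ((lam u).parts.card : ℝ) := by
          push_cast
          have h1 := (hbox u).2.2.1
          have h2 := (hbox t).2.2.2
          have := hcol u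
          linarith
        have : (B t - B u : ℤ) < ((lam u).parts.card : ℤ) := by exact_mod_cast hr
        omega
      have := cell_mem_placed (lam u) (A u) (B u) 1 (B t - B u + 1) le_rfl (by omega) hc
      convert this using 2 <;> ring
    exact Set.disjoint_left.mp (hdisj htu) hmem1 hmem2
  -- Step 2: the key gap
  have key : ∀ t u : Fin m, t ≠ u → A t < A u → A t + B t + k ≤ A u + B u := by
    intro t u htu hlt
    have hBlt : B t < B u := by
      by_contra hle
      exact step1 t u htu hlt.le (by omega)
    by_contra hcon
    push_neg at hcon
    have hAgap : A u - A t < k := by omega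
    have hBgap : B u - B t < k := by omega
    have hmem2 : ((A u : ℤ), (B u : ℤ)) ∈ placedFerrers (lam u) (A u) (B u) := by
      have hc : (1:ℤ) ≤ (((lam u).parts.filter (fun y => (1:ℤ) ≤ (y : ℤ))).card : ℤ) := by
        rw [card_coe, hfiltall u]
        have hr := hcol u
        have : (0:ℝ) < ((lam u).parts.card : ℝ) := by linarith
        exact_mod_cast this
      have := cell_mem_placed (lam u) (A u) (B u) 1 1 le_rfl le_rfl hc
      convert this using 2 <;> ring
    have hmem1 : ((A u : ℤ), (B u : ℤ)) ∈ placedFerrers (lam t) (A t) (B t) := by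
      have hmono : ((lam t).parts.filter (fun y : ℕ => (k:ℕ) ≤ y)) ≤
          ((lam t).parts.filter (fun y : ℕ => A u - A t + 1 ≤ (y : ℤ))) := by
        apply Multiset.monotone_filter_right
        intro y hy
        have : (k : ℤ) ≤ (y : ℤ) := by exact_mod_cast hy
        omega
      have hc : B u - B t + 1 ≤
          (((lam t).parts.filter (fun y => (A u - A t + 1 : ℤ) ≤ (y : ℤ))).card : ℤ) := by
        rw [card_coe]
        have h1 := hmed t
        have h2 := Multiset.card_le_card hmono
        have : (k : ℤ) ≤ (((lam t).parts.filter (fun y : ℕ => A u - A t + 1 ≤ (y : ℤ))).card : ℤ) := by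
          exact_mod_cast le_trans h1 h2
        omega
      have := cell_mem_placed (lam t) (A t) (B t) (A u - A t + 1) (B u - B t + 1)
        (by omega) (by omega) hc
      convert this using 2 <;> ring
    exact Set.disjoint_left.mp (hdisj htu) hmem1 hmem2
  -- Step 3: packing
  set f : Fin m → ℤ := fun t => A t + B t with hf
  have hAne : ∀ t u : Fin m, t ≠ u → A t ≠ A u := by
    intro t u htu heq
    rcases le_or_gt (B u) (B t) with h | h
    · exact step1 t u htu heq.le h
    · exact step1 u t htu.symm heq.ge h.le
  have hfsep : ∀ t u : Fin m, t ≠ u → f t < f u → f t + k ≤ f u := by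
    intro t u htu hlt
    rcases lt_trichotomy (A t) (A u) with h | h | h
    · have := key t u htu h; simp only [hf] at hlt ⊢; omega
    · exact absurd h (hAne t u htu)
    · have := key u t htu.symm h; simp only [hf] at hlt ⊢; omega
  have hfinj : Function.Injective f := by
    intro t u heq
    by_contra htu
    rcases lt_trichotomy (A t) (A u) with h | h | h
    · have := key t u htu h; simp only [hf] at heq; omega
    · exact hAne t u htu h
    · have := key u t (Ne.symm htu) h; simp only [hf] at heq; omega
  set S : Finset ℤ := Finset.image f Finset.univ with hS
  have hScard : S.card = m := by
    rw [hS, Finset.card_image_of_injective _ hfinj, Finset.card_univ, Fintype.card_fin]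
  have hSne : S.Nonempty := by
    rw [← Finset.card_pos, hScard]; exact hm
  have hsep : ∀ x ∈ S, ∀ y ∈ S, x < y → x + k ≤ y := by
    intro x hx y hy hxy
    obtain ⟨t, -, rfl⟩ := Finset.mem_image.mp hx
    obtain ⟨u, -, rfl⟩ := Finset.mem_image.mp hy
    exact hfsep t u (by rintro rfl; exact lt_irrefl _ hxy) hxy
  have hpack := packed (k : ℤ) S.card S hSne rfl hsep
  have hlo : a + b ≤ S.min' hSne := by
    apply Finset.le_min'
    intro y hy
    obtain ⟨t, -, rfl⟩ := Finset.mem_image.mp hy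
    have h1 : a ≤ A t := by exact_mod_cast (hbox t).1
    have h2 : b ≤ B t := by exact_mod_cast (hbox t).2.2.1
    simp only [hf]; omega
  have hhi : S.max' hSne ≤ a + b + 2 * ⌊s⌋ := by
    apply Finset.max'_le
    intro y hy
    obtain ⟨t, -, rfl⟩ := Finset.mem_image.mp hy
    have h1 : A t - a ≤ ⌊s⌋ := Int.le_floor.mpr (by push_cast; linarith [(hbox t).2.1])
    have h2 : B t - b ≤ ⌊s⌋ := Int.le_floor.mpr (by push_cast; linarith [(hbox t).2.2.2])
    simp only [hf]; omega
  rw [hScard] at hpack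
  have hZ : ((m : ℤ) - 1) * k ≤ 2 * ⌊s⌋ := by
    have hmm := S.min'_le _ (S.max'_mem hSne)
    nlinarith [hpack, hlo, hhi]
  have hR : ((m : ℝ) - 1) * k ≤ 2 * s := by
    have h1 := (@Int.cast_le ℝ _ _ _).mpr hZ
    have h2 : (⌊s⌋ : ℝ) ≤ s := Int.floor_le s
    push_cast at h1
    nlinarith
  have : (m : ℝ) - 1 ≤ 2 * s / k := (le_div_iff₀ hk0).mpr hR
  linarith
end

section
/- For all integers n ≥ 1 and t ≥ 2, if S denotes the set of partitions of n all of whose parts are smaller than t, then |S| · ⌈t/2⌉ ≤ p(n + 3t). -/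
open Filter Real

/-- For `n ≥ 1` and `t ≥ 2`, if `S` is the set of partitions of `n` all of whose
parts are smaller than `t`, then `|S| · ⌈t/2⌉ ≤ p(n + 3t)`. -/
theorem small_parts_partitions_bound (n t : ℕ) (hn : 1 ≤ n) (ht : 2 ≤ t) :
    Nat.card {lam : Nat.Partition n // ∀ x ∈ lam.parts, x < t} * ((t + 1) / 2) ≤
      numPartitions (n + 3 * t) := by
  classical
  set m := (t + 1) / 2 with hm
  -- the injection
  let f : {lam : Nat.Partition n // ∀ x ∈ lam.parts, x < t} × Fin m → Nat.Partition (n + 3 * t) :=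
    fun p =>
      ⟨(2 * t - p.2.1) ::ₘ (t + p.2.1) ::ₘ p.1.1.parts,
        by
          intro i hi
          simp only [Multiset.mem_cons] at hi
          rcases hi with h | h | h
          · have := p.2.2; omega
          · omega
          · exact p.1.1.parts_pos h,
        by
          have hs := p.1.1.parts_sum
          have hk : (p.2 : ℕ) < m := p.2.2
          simp only [Multiset.sum_cons, hs]
          omega⟩
  have hsup : ∀ p : {lam : Nat.Partition n // ∀ x ∈ lam.parts, x < t} × Fin m,
      (f p).parts.sup = 2 * t - (p.2 : ℕ) := by
    intro p
    have hk : (p.2 : ℕ) < m := p.2.2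
    have h2k : 2 * (p.2 : ℕ) < t := by omega
    show ((2 * t - (p.2 : ℕ)) ::ₘ (t + (p.2 : ℕ)) ::ₘ p.1.1.parts).sup = 2 * t - (p.2 : ℕ)
    rw [Multiset.sup_cons, Multiset.sup_cons]
    have h1 : p.1.1.parts.sup ≤ 2 * t - (p.2 : ℕ) := by
      apply Multiset.sup_le.2
      intro b hb
      have := p.1.2 b hb
      omega
    have h2 : t + (p.2 : ℕ) ≤ 2 * t - (p.2 : ℕ) := by omega
    exact sup_eq_left.2 (sup_le h2 h1)
  have hinj : Function.Injective f := by
    rintro ⟨⟨a, ha⟩, i⟩ ⟨⟨b, hb⟩, j⟩ hfe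
    have hparts : (f (⟨⟨a, ha⟩, i⟩)).parts = (f (⟨⟨b, hb⟩, j⟩)).parts := by rw [hfe]
    have hsup1 := hsup ⟨⟨a, ha⟩, i⟩
    have hsup2 := hsup ⟨⟨b, hb⟩, j⟩
    have hij : (i : ℕ) = (j : ℕ) := by
      have : 2 * t - (i : ℕ) = 2 * t - (j : ℕ) := by
        rw [← hsup1, ← hsup2, hparts]
      have hi := i.2; have hj := j.2
      omega
    have hparts' : (2 * t - (i : ℕ)) ::ₘ (t + (i : ℕ)) ::ₘ a.parts
        = (2 * t - (i : ℕ)) ::ₘ (t + (i : ℕ)) ::ₘ b.parts := by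
      have := hparts
      simpa [f, hij] using this
    have hab : a.parts = b.parts := by
      have h1 := (Multiset.cons_inj_right _).1 hparts'
      exact (Multiset.cons_inj_right _).1 h1
    have : a = b := Nat.Partition.ext hab
    simp [this, Fin.ext hij]
  calc Nat.card {lam : Nat.Partition n // ∀ x ∈ lam.parts, x < t} * m
      = Nat.card ({lam : Nat.Partition n // ∀ x ∈ lam.parts, x < t} × Fin m) := by
        rw [Nat.card_prod, Nat.card_eq_fintype_card (α := Fin m), Fintype.card_fin]
    _ ≤ Nat.card (Nat.Partition (n + 3 * t)) := Nat.card_le_card_of_injective f hinj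
    _ = numPartitions (n + 3 * t) := by rw [numPartitions, Nat.card_eq_fintype_card]
end

section
/- Let n and k be positive integers, let S be the set of partitions of n having fewer than k parts greater than k, and let ℱ be a family of subsets of {k+1, k+2, …, 11k} such that the symmetric difference of any two distinct members of ℱ has size greater than 2k. Then |S| · |ℱ| ≤ Σ_{m=n}^{n+60k²+5k} p(m). -/
open Filter Real

/-!
Adding the elements of `A ∈ ℱ` as new parts to `λ ∈ S` gives a partition of `n + ΣA`, and
`ΣA ≤ k + 1 + ⋯ + 11k = 60k² + 5k`. This map is injective: the parts greater than `k` of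
`λ ⊎ A` are those of `λ` together with `A`, so if `λ ⊎ A = λ' ⊎ A'` then `A \ A'` consists of
large parts of `λ'` and `A' \ A` of large parts of `λ`, whence `|A ∆ A'| < 2k` and `A = A'`.
-/

namespace Finset

lemma sum_Ioc_id_mul_two_add {a b : ℕ} (hab : a ≤ b) :
    (∑ i ∈ Ioc a b, i) * 2 + a * (a + 1) = b * (b + 1) := by
  induction b, hab using Nat.le_induction with
  | base => simp
  | succ b hab ih => rw [sum_Ioc_succ_top hab]; linarith

lemma sum_Icc_succ_eleven_mul (k : ℕ) : ∑ i ∈ Icc (k + 1) (11 * k), i = 60 * k ^ 2 + 5 * k := by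
  have h := sum_Ioc_id_mul_two_add (by omega : k ≤ 11 * k)
  rw [Icc_add_one_left_eq_Ioc]
  nlinarith

variable {α : Type*} [DecidableEq α]

lemma card_sdiff_le_of_add_val_eq {s t : Multiset α} {A B : Finset α}
    (h : s + A.val = t + B.val) : #(A \ B) ≤ Multiset.card t := by
  have hle : A.val - B.val ≤ t := by
    rw [Multiset.sub_le_iff_le_add, ← h]
    exact Multiset.le_add_left _ _
  rw [← card_val, sdiff_val]
  exact Multiset.card_le_card hle

lemma card_symmDiff_le_of_add_val_eq (p : α → Prop) [DecidablePred p] {s t : Multiset α}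
    {A B : Finset α} (hA : ∀ a ∈ A, p a) (hB : ∀ b ∈ B, p b) (h : s + A.val = t + B.val) :
    #(symmDiff A B) ≤ Multiset.card (s.filter p) + Multiset.card (t.filter p) := by
  have hp : s.filter p + A.val = t.filter p + B.val := by
    simpa only [Multiset.filter_add, Multiset.filter_eq_self.mpr hA,
      Multiset.filter_eq_self.mpr hB] using congrArg (Multiset.filter p) h
  calc #(symmDiff A B) ≤ #(A \ B) + #(B \ A) := card_union_le _ _
    _ ≤ Multiset.card (t.filter p) + Multiset.card (s.filter p) :=
      add_le_add (card_sdiff_le_of_add_val_eq hp) (card_sdiff_le_of_add_val_eq hp.symm)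
    _ = _ := add_comm _ _

end Finset

namespace Nat.Partition

def addParts {n : ℕ} (lam : n.Partition) (s : Multiset ℕ) (hs : ∀ i ∈ s, 0 < i) :
    (n + s.sum).Partition where
  parts := lam.parts + s
  parts_pos hi := (Multiset.mem_add.mp hi).elim lam.parts_pos (hs _)
  parts_sum := by rw [Multiset.sum_add, lam.parts_sum]

end Nat.Partition

theorem few_large_parts_code_bound_general (n k : ℕ)
    (F : Finset (Finset ℕ))
    (hsub : ∀ A ∈ F, A ⊆ Finset.Icc (k + 1) (11 * k))
    (hdist : ∀ A ∈ F, ∀ B ∈ F, A ≠ B → 2 * k < (symmDiff A B).card) :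
    Nat.card {lam : Nat.Partition n //
        ((lam.parts.filter fun x => k < x).card) < k} * F.card ≤
      ∑ m ∈ Finset.Icc n (n + 60 * k ^ 2 + 5 * k), numPartitions m := by
  let S := {lam : Nat.Partition n // (lam.parts.filter fun x => k < x).card < k}
  set T := Finset.Icc n (n + 60 * k ^ 2 + 5 * k)
  have hlarge : ∀ A ∈ F, ∀ a ∈ A, k < a := fun A hA a ha => (Finset.mem_Icc.mp (hsub A hA ha)).1
  let f : S × F → Σ m : ℕ, m.Partition := fun p =>
    ⟨_, p.1.1.addParts p.2.1.val fun a ha => (hlarge _ p.2.2 a ha).trans_le' k.zero_le⟩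
  have hf_mem : ∀ p, f p ∈ T.sigma fun _ => Finset.univ := by
    rintro ⟨-, A, hA⟩
    have : ∑ a ∈ A, a ≤ 60 * k ^ 2 + 5 * k :=
      Finset.sum_Icc_succ_eleven_mul k ▸ Finset.sum_le_sum_of_subset (hsub A hA)
    simp only [f, Finset.mem_sigma, Finset.mem_univ, and_true, T, Finset.mem_Icc,
      Finset.sum_val, id]
    omega
  have hf_inj : Function.Injective f := by
    rintro ⟨⟨lam, hlam⟩, A, hA⟩ ⟨⟨lam', hlam'⟩, A', hA'⟩ h
    have hparts : lam.parts + A.val = lam'.parts + A'.val := congrArg (fun x => x.2.parts) h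
    obtain rfl : A = A' := by
      by_contra hne
      have := Finset.card_symmDiff_le_of_add_val_eq (k < ·) (hlarge A hA) (hlarge A' hA') hparts
      have := hdist A hA A' hA' hne
      omega
    obtain rfl : lam = lam' := Nat.Partition.ext (add_right_cancel hparts)
    rfl
  calc Nat.card S * F.card = Fintype.card (S × F) := by
        rw [Fintype.card_prod, Nat.card_eq_fintype_card, Fintype.card_coe]
    _ ≤ (T.sigma fun _ => Finset.univ).card :=
        Finset.card_le_card_of_injOn f (fun p _ => hf_mem p) hf_inj.injOn
    _ = ∑ m ∈ T, numPartitions m := Finset.card_sigma _ _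

/-- If `S` is the set of partitions of `n` having fewer than `k` parts greater
than `k`, and `ℱ` is a family of subsets of `{k+1, …, 11k}` any two distinct
members of which have symmetric difference of size greater than `2k`, then
`|S| · |ℱ| ≤ Σ_{m=n}^{n+60k²+5k} p(m)`. -/
theorem few_large_parts_code_bound (n k : ℕ) (hn : 0 < n) (hk : 0 < k)
    (F : Finset (Finset ℕ))
    (hsub : ∀ A ∈ F, A ⊆ Finset.Icc (k + 1) (11 * k))
    (hdist : ∀ A ∈ F, ∀ B ∈ F, A ≠ B → 2 * k < (symmDiff A B).card) :
    Nat.card {lam : Nat.Partition n //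
        ((lam.parts.filter fun x => k < x).card) < k} * F.card ≤
      ∑ m ∈ Finset.Icc n (n + 60 * k ^ 2 + 5 * k), numPartitions m :=
  few_large_parts_code_bound_general n k F hsub hdist
end
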